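/- arXiv:2203.08859 — 9 statements merged into one kernel-verified Lean document; each statement's English description precedes it below -/
import Mathlib

section
/- Under the stated assumptions, the process (1/η_m^{Y})_{0 ≤ m < n}, where η_m^{Y}(ω) := η_m^{Y(ω)}(ω), is a martingale under P with respect to the initially enlarged filtration (G_m)_{0 ≤ m < n}; that is, for all 0 ≤ m < m' < n, E_P[1/η_{m'}^{Y} | G_m] = 1/η_m^{Y} P-almost surely. -/
/-!
On `{Y = y}` the process `1/η_m^Y` equals `P[Y = y] / h_m^y` with `h_m^y = P[Y = y | ℱ_m]`.
Since `1/h_m^y` is `ℱ_m`-measurable, the defining property of `h_m^y`, used with lower integrals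
(so that no integrability of `1/h_m^y` is needed in advance), gives
`∫_{A ∩ {Y = y}} 1/h_m^y dP = ∫_A h_m^y / h_m^y dP = P(A)` for `A ∈ ℱ_m`. Hence
`∫_{A ∩ {Y = y}} 1/η_k^Y dP = P(Y = y) P(A)` for every `k ≥ m`: these integrals do not depend on
the time `k`. Taking `A = Ω` and summing over `y` shows that `1/η_k^Y` is integrable, and since
the sets `A ∩ {Y = y}` generate `ℱ_m ∨ σ(Y)` through countable unions, the set integrals over
them determine the conditional expectation.
-/

open MeasureTheory Filter Set
open scoped ENNReal

/-- The conditional density `η_m^y = P[Y = y | ℱ m] / P[Y = y]` of the signal `Y`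
with respect to the filtration `ℱ`. -/
noncomputable def condDensity {Ω E : Type*} {mΩ : MeasurableSpace Ω}
    (P : Measure Ω) (ℱ : ℕ → MeasurableSpace Ω) (Y : Ω → E) (m : ℕ) (y : E) : Ω → ℝ :=
  fun ω =>
    (P[Set.indicator {ω' | Y ω' = y} (fun _ => (1 : ℝ)) | ℱ m]) ω / (P {ω' | Y ω' = y}).toReal

section

variable {Ω : Type*} {m mΩ : MeasurableSpace Ω} {P : Measure Ω} [IsFiniteMeasure P] {B : Set Ω}

theorem setLIntegral_eq_lintegral_condExp_indicator_mul (hm : m ≤ mΩ) (hB : MeasurableSet B)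
    {g : Ω → ℝ≥0∞} (hg : Measurable[m] g) :
    ∫⁻ ω in B, g ω ∂P
      = ∫⁻ ω, ENNReal.ofReal (P[B.indicator (fun _ => (1 : ℝ)) | m] ω) * g ω ∂P := by
  have : SigmaFinite (P.trim hm) := (isFiniteMeasure_trim hm).toSigmaFinite
  set h := P[B.indicator (fun _ => (1 : ℝ)) | m]
  have htrim : (P.restrict B).trim hm = (P.withDensity fun ω => ENNReal.ofReal (h ω)).trim hm := by
    refine @Measure.ext _ m _ _ fun A hA => ?_
    rw [trim_measurableSet_eq hm hA, trim_measurableSet_eq hm hA,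
      Measure.restrict_apply (hm A hA), withDensity_apply _ (hm A hA),
      ← ofReal_integral_eq_lintegral_ofReal integrable_condExp.integrableOn
        (ae_restrict_of_ae (condExp_nonneg (Eventually.of_forall
          fun ω => indicator_nonneg (fun _ _ => zero_le_one) ω))),
      setIntegral_condExp hm ((integrable_const 1).indicator hB) hA,
      integral_indicator_const _ hB, smul_eq_mul, mul_one, measureReal_restrict_apply hB,
      ofReal_measureReal, inter_comm]
  rw [← lintegral_trim hm hg, htrim, lintegral_trim hm hg,
    lintegral_withDensity_eq_lintegral_mul _
      (stronglyMeasurable_condExp.measurable.ennreal_ofReal.mono hm le_rfl) (hg.mono hm le_rfl)]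
  rfl

theorem setLIntegral_inter_inv_condExp_indicator (hm : m ≤ mΩ) (hB : MeasurableSet B)
    (hpos : ∀ᵐ ω ∂P, 0 < P[B.indicator (fun _ => (1 : ℝ)) | m] ω)
    {A : Set Ω} (hA : MeasurableSet[m] A) :
    ∫⁻ ω in A ∩ B, ENNReal.ofReal (P[B.indicator (fun _ => (1 : ℝ)) | m] ω)⁻¹ ∂P = P A := by
  set h := P[B.indicator (fun _ => (1 : ℝ)) | m]
  calc ∫⁻ ω in A ∩ B, ENNReal.ofReal (h ω)⁻¹ ∂P
      = ∫⁻ ω in B, A.indicator (fun ω => ENNReal.ofReal (h ω)⁻¹) ω ∂P := by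
        rw [lintegral_indicator (hm A hA), Measure.restrict_restrict (hm A hA)]
    _ = ∫⁻ ω, ENNReal.ofReal (h ω) * A.indicator (fun ω => ENNReal.ofReal (h ω)⁻¹) ω ∂P :=
        setLIntegral_eq_lintegral_condExp_indicator_mul hm hB
          ((stronglyMeasurable_condExp.measurable.inv.ennreal_ofReal).indicator hA)
    _ = ∫⁻ ω, A.indicator 1 ω ∂P := by
        refine lintegral_congr_ae ?_
        filter_upwards [hpos] with ω hω
        by_cases hωA : ω ∈ A
        · simp [hωA, ← ENNReal.ofReal_mul hω.le, mul_inv_cancel₀ hω.ne']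
        · simp [hωA]
    _ = P A := lintegral_indicator_one (hm A hA)

end

section

variable {Ω : Type*}

theorem isPiSystem_image2_inter_measurableSet (m₁ m₂ : MeasurableSpace Ω) :
    IsPiSystem (image2 (· ∩ ·) {s | MeasurableSet[m₁] s} {t | MeasurableSet[m₂] t}) := by
  rintro _ ⟨s₁, hs₁, t₁, ht₁, rfl⟩ _ ⟨s₂, hs₂, t₂, ht₂, rfl⟩ -
  exact ⟨s₁ ∩ s₂, hs₁.inter hs₂, t₁ ∩ t₂, ht₁.inter ht₂, inter_inter_inter_comm _ _ _ _⟩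

theorem generateFrom_image2_inter_measurableSet (m₁ m₂ : MeasurableSpace Ω) :
    MeasurableSpace.generateFrom
      (image2 (· ∩ ·) {s | MeasurableSet[m₁] s} {t | MeasurableSet[m₂] t}) = m₁ ⊔ m₂ := by
  refine le_antisymm (MeasurableSpace.generateFrom_le ?_) (sup_le ?_ ?_)
  · rintro _ ⟨s, hs, t, ht, rfl⟩
    exact (le_sup_left (b := m₂) s hs).inter (le_sup_right (a := m₁) t ht)
  · intro s hs
    exact MeasurableSpace.measurableSet_generateFrom ⟨s, hs, univ, MeasurableSet.univ, inter_univ s⟩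
  · intro t ht
    exact MeasurableSpace.measurableSet_generateFrom ⟨univ, MeasurableSet.univ, t, ht, univ_inter t⟩

variable {F : Type*} [NormedAddCommGroup F] [NormedSpace ℝ F] [CompleteSpace F]
  {m m₁ m₂ mΩ : MeasurableSpace Ω} {P : Measure Ω} [IsFiniteMeasure P]

theorem ae_eq_condExp_sup_of_forall_setIntegral_inter_eq (hm₁ : m₁ ≤ mΩ) (hm₂ : m₂ ≤ mΩ)
    {f g : Ω → F} (hf : Integrable f P) (hg : Integrable g P) (hgm : StronglyMeasurable[m₁ ⊔ m₂] g)
    (hfg : ∀ s, MeasurableSet[m₁] s → ∀ t, MeasurableSet[m₂] t →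
      ∫ ω in s ∩ t, g ω ∂P = ∫ ω in s ∩ t, f ω ∂P) :
    g =ᵐ[P] P[f | m₁ ⊔ m₂] := by
  have hm : m₁ ⊔ m₂ ≤ mΩ := sup_le hm₁ hm₂
  have : SigmaFinite (P.trim hm) := (isFiniteMeasure_trim hm).toSigmaFinite
  suffices hsets : ∀ s, MeasurableSet[m₁ ⊔ m₂] s → ∫ ω in s, g ω ∂P = ∫ ω in s, f ω ∂P from
    ae_eq_condExp_of_forall_setIntegral_eq hm hf (fun s _ _ => hg.integrableOn)
      (fun s hs _ => hsets s hs) hgm.aestronglyMeasurable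
  intro s hs
  induction s, hs using MeasurableSpace.induction_on_inter
    (generateFrom_image2_inter_measurableSet m₁ m₂).symm
    (isPiSystem_image2_inter_measurableSet m₁ m₂) with
  | empty => simp
  | basic _ hst =>
    obtain ⟨s, hs, t, ht, rfl⟩ := hst
    exact hfg s hs t ht
  | compl t htm ht =>
    have huniv := hfg univ MeasurableSet.univ univ MeasurableSet.univ
    rw [univ_inter, setIntegral_univ, setIntegral_univ] at huniv
    rw [setIntegral_compl (hm t htm) hf, setIntegral_compl (hm t htm) hg, huniv, ht]
  | iUnion s hdisj hsm hs =>
    rw [integral_iUnion (fun i => hm _ (hsm i)) hdisj hf.integrableOn,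
      integral_iUnion (fun i => hm _ (hsm i)) hdisj hg.integrableOn]
    exact tsum_congr hs

theorem ae_eq_condExp_sup_comap_of_forall_setIntegral_inter_preimage_singleton_eq
    {E : Type*} [Countable E] (hm : m ≤ mΩ) {Y : Ω → E} (hY : MeasurableSpace.comap Y ⊤ ≤ mΩ)
    {f g : Ω → F} (hf : Integrable f P) (hg : Integrable g P)
    (hgm : StronglyMeasurable[m ⊔ MeasurableSpace.comap Y ⊤] g)
    (hfg : ∀ s, MeasurableSet[m] s → ∀ y,
      ∫ ω in s ∩ Y ⁻¹' {y}, g ω ∂P = ∫ ω in s ∩ Y ⁻¹' {y}, f ω ∂P) :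
    g =ᵐ[P] P[f | m ⊔ MeasurableSpace.comap Y ⊤] := by
  refine ae_eq_condExp_sup_of_forall_setIntegral_inter_eq hm hY hf hg hgm ?_
  rintro s hs _ ⟨t, -, rfl⟩
  have hdecomp : s ∩ Y ⁻¹' t = ⋃ y : t, s ∩ Y ⁻¹' {(y : E)} := by
    ext ω; simp
  have hmeas : ∀ y : t, MeasurableSet (s ∩ Y ⁻¹' {(y : E)}) :=
    fun y => hm s hs |>.inter (hY _ ⟨{(y : E)}, trivial, rfl⟩)
  have hdisj : Pairwise (Function.onFun Disjoint fun y : t => s ∩ Y ⁻¹' {(y : E)}) := by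
    intro y y' hyy'
    refine Disjoint.inter_left' s (Disjoint.inter_right' s ?_)
    exact disjoint_singleton.2 (Subtype.coe_injective.ne hyy') |>.preimage Y
  rw [hdecomp, integral_iUnion hmeas hdisj hg.integrableOn,
    integral_iUnion hmeas hdisj hf.integrableOn]
  exact tsum_congr fun y => hfg s hs y

end

section

variable {Ω E : Type*} {mΩ : MeasurableSpace Ω}

theorem measurable_condDensity_comp [Countable E] (P : Measure Ω) (ℱ : ℕ → MeasurableSpace Ω)
    (Y : Ω → E) (k : ℕ) :
    Measurable[ℱ k ⊔ MeasurableSpace.comap Y ⊤] fun ω => condDensity P ℱ Y k (Y ω) ω := by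
  let : MeasurableSpace E := ⊤
  have : MeasurableSingletonClass E := ⟨fun _ => trivial⟩
  have hYm : Measurable[ℱ k ⊔ MeasurableSpace.comap Y ⊤] Y :=
    measurable_iff_comap_le.2 le_sup_right
  have hF : ∀ y, Measurable[ℱ k ⊔ MeasurableSpace.comap Y ⊤] (condDensity P ℱ Y k y) :=
    fun y => (stronglyMeasurable_condExp.measurable.div_const _).mono le_sup_left le_rfl
  exact (measurable_from_prod_countable_left (f := fun p : Ω × E => condDensity P ℱ Y k p.2 p.1)
    hF).comp (measurable_id.prodMk hYm)

variable {P : Measure Ω} {ℱ : ℕ → MeasurableSpace Ω} {Y : Ω → E} {k : ℕ}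

theorem ae_inv_condDensity_comp_pos [Countable E]
    (hη : ∀ y ∈ range Y, ∀ᵐ ω ∂P, 0 < condDensity P ℱ Y k y ω) :
    ∀ᵐ ω ∂P, 0 < (condDensity P ℱ Y k (Y ω) ω)⁻¹ := by
  filter_upwards [ae_all_iff.2 fun y : range Y => hη y y.2] with ω hω
  exact inv_pos.2 (hω ⟨Y ω, mem_range_self ω⟩)

variable [IsFiniteMeasure P]

theorem setLIntegral_inter_preimage_inv_condDensity (hk : ℱ k ≤ mΩ)
    (hY : MeasurableSpace.comap Y ⊤ ≤ mΩ)
    (hη : ∀ y ∈ range Y, ∀ᵐ ω ∂P, 0 < condDensity P ℱ Y k y ω) (y : E)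
    {A : Set Ω} (hA : MeasurableSet[ℱ k] A) :
    ∫⁻ ω in A ∩ Y ⁻¹' {y}, ENNReal.ofReal (condDensity P ℱ Y k (Y ω) ω)⁻¹ ∂P
      = P (Y ⁻¹' {y}) * P A := by
  by_cases hy : y ∈ range Y
  swap
  · simp [preimage_singleton_eq_empty.2 hy]
  set B := Y ⁻¹' {y}
  have hB : MeasurableSet B := hY _ ⟨{y}, trivial, rfl⟩
  set h := P[B.indicator (fun _ => (1 : ℝ)) | ℱ k]
  have hpos : ∀ᵐ ω ∂P, 0 < h ω := by
    filter_upwards [hη y hy] with ω hω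
    exact ((div_pos_iff.1 hω).resolve_right fun hneg =>
      hneg.2.not_ge ENNReal.toReal_nonneg).1
  calc ∫⁻ ω in A ∩ B, ENNReal.ofReal (condDensity P ℱ Y k (Y ω) ω)⁻¹ ∂P
      = ∫⁻ ω in A ∩ B, ENNReal.ofReal (P B).toReal * ENNReal.ofReal (h ω)⁻¹ ∂P := by
        refine setLIntegral_congr_fun ((hk A hA).inter hB) fun ω hω => ?_
        rw [show Y ω = y from hω.2, condDensity, inv_div, div_eq_mul_inv,
          ENNReal.ofReal_mul ENNReal.toReal_nonneg]
        rfl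
    _ = P B * P A := by
        rw [lintegral_const_mul' _ _ ENNReal.ofReal_ne_top,
          setLIntegral_inter_inv_condExp_indicator hk hB hpos hA,
          ENNReal.ofReal_toReal (measure_ne_top P B)]

theorem integrable_inv_condDensity_comp [Countable E] (hk : ℱ k ≤ mΩ)
    (hY : MeasurableSpace.comap Y ⊤ ≤ mΩ)
    (hη : ∀ y ∈ range Y, ∀ᵐ ω ∂P, 0 < condDensity P ℱ Y k y ω) :
    Integrable (fun ω => (condDensity P ℱ Y k (Y ω) ω)⁻¹) P := by
  have hmeas : ∀ y : E, MeasurableSet (Y ⁻¹' {y}) := fun y => hY _ ⟨{y}, trivial, rfl⟩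
  have hdisj : Pairwise (Function.onFun Disjoint fun y : E => Y ⁻¹' {y}) :=
    fun y y' hyy' => (disjoint_singleton.2 hyy').preimage Y
  refine (lintegral_ofReal_ne_top_iff_integrable
    ((measurable_condDensity_comp P ℱ Y k).inv.mono (sup_le hk hY) le_rfl).aestronglyMeasurable
    ((ae_inv_condDensity_comp_pos hη).mono fun _ => le_of_lt)).1 ?_
  calc ∫⁻ ω, ENNReal.ofReal (condDensity P ℱ Y k (Y ω) ω)⁻¹ ∂P
      = ∑' y, ∫⁻ ω in univ ∩ Y ⁻¹' {y}, ENNReal.ofReal (condDensity P ℱ Y k (Y ω) ω)⁻¹ ∂P := by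
        simp_rw [univ_inter]
        rw [← lintegral_iUnion hmeas hdisj, ← preimage_iUnion, iUnion_of_singleton, preimage_univ,
          Measure.restrict_univ]
    _ = ∑' y, P (Y ⁻¹' {y}) * P univ := tsum_congr fun y =>
        setLIntegral_inter_preimage_inv_condDensity hk hY hη y MeasurableSet.univ
    _ = P univ * P univ := by
        rw [ENNReal.tsum_mul_right, ← measure_iUnion hdisj hmeas, ← preimage_iUnion,
          iUnion_of_singleton, preimage_univ]
    _ ≠ ∞ := ENNReal.mul_ne_top (measure_ne_top P univ) (measure_ne_top P univ)

theorem setIntegral_inter_preimage_inv_condDensity [Countable E] (hk : ℱ k ≤ mΩ)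
    (hY : MeasurableSpace.comap Y ⊤ ≤ mΩ)
    (hη : ∀ y ∈ range Y, ∀ᵐ ω ∂P, 0 < condDensity P ℱ Y k y ω) (y : E)
    {A : Set Ω} (hA : MeasurableSet[ℱ k] A) :
    ∫ ω in A ∩ Y ⁻¹' {y}, (condDensity P ℱ Y k (Y ω) ω)⁻¹ ∂P = P.real (Y ⁻¹' {y}) * P.real A := by
  rw [integral_eq_lintegral_of_nonneg_ae
    (ae_restrict_of_ae ((ae_inv_condDensity_comp_pos hη).mono fun _ => le_of_lt))
    ((measurable_condDensity_comp P ℱ Y k).inv.mono (sup_le hk hY) le_rfl).aestronglyMeasurable,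
    setLIntegral_inter_preimage_inv_condDensity hk hY hη y hA, ENNReal.toReal_mul]
  rfl

end

theorem stmt0_general {Ω E : Type*} {mΩ : MeasurableSpace Ω} [Countable E]
    (P : Measure Ω) [IsProbabilityMeasure P] (n : ℕ)
    (ℱ : ℕ → MeasurableSpace Ω) (hmono : Monotone ℱ) (hle : ∀ m, ℱ m ≤ mΩ)
    (Y : Ω → E) (hY : @Measurable Ω E (ℱ n) ⊤ Y)
    (hη : ∀ m, m < n → ∀ y ∈ Set.range Y, ∀ᵐ ω ∂P, 0 < condDensity P ℱ Y m y ω) :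
    ∀ m m', m < m' → m' < n →
      P[fun ω => (condDensity P ℱ Y m' (Y ω) ω)⁻¹ | ℱ m ⊔ MeasurableSpace.comap Y ⊤]
        =ᵐ[P] fun ω => (condDensity P ℱ Y m (Y ω) ω)⁻¹ := by
  intro m m' hmm' hm'n
  have hYm : MeasurableSpace.comap Y ⊤ ≤ mΩ := (measurable_iff_comap_le.1 hY).trans (hle n)
  have hηm := hη m (hmm'.trans hm'n)
  have hηm' := hη m' hm'n
  refine (ae_eq_condExp_sup_comap_of_forall_setIntegral_inter_preimage_singleton_eq (hle m) hYm
    (integrable_inv_condDensity_comp (hle m') hYm hηm')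
    (integrable_inv_condDensity_comp (hle m) hYm hηm)
    (measurable_condDensity_comp P ℱ Y m).inv.stronglyMeasurable fun A hA y => ?_).symm
  rw [setIntegral_inter_preimage_inv_condDensity (hle m) hYm hηm y hA,
    setIntegral_inter_preimage_inv_condDensity (hle m') hYm hηm' y (hmono hmm'.le A hA)]

/-- The process `m ↦ 1 / η_m^{Y}` is a martingale under `P` with respect to the initially
enlarged filtration `G_m = ℱ_m ⊔ σ(Y)`. -/
theorem stmt0 {Ω E : Type*} {mΩ : MeasurableSpace Ω} [Countable E]
    (P : Measure Ω) [IsProbabilityMeasure P] (n : ℕ)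
    (ℱ : ℕ → MeasurableSpace Ω) (hmono : Monotone ℱ) (hle : ∀ m, ℱ m ≤ mΩ)
    (Y : Ω → E) (hY : @Measurable Ω E (ℱ n) ⊤ Y)
    (hYpos : ∀ y ∈ Set.range Y, 0 < P {ω | Y ω = y})
    (hη : ∀ m, m < n → ∀ y ∈ Set.range Y, ∀ᵐ ω ∂P, 0 < condDensity P ℱ Y m y ω) :
    ∀ m m', m < m' → m' < n →
      P[fun ω => (condDensity P ℱ Y m' (Y ω) ω)⁻¹ | ℱ m ⊔ MeasurableSpace.comap Y ⊤]
        =ᵐ[P] fun ω => (condDensity P ℱ Y m (Y ω) ω)⁻¹ :=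
  stmt0_general P n ℱ hmono hle Y hY hη
end

section
/- Under the stated assumptions, for every 0 ≤ m < n one has E_P[1/η_m^{Y} | F_m] = 1 P-almost surely, where η_m^{Y}(ω) := η_m^{Y(ω)}(ω). -/
/-!
Write `g_y = P[1_{Y = y} | ℱ m]` and `c_y = P(Y = y)`, so that
`1/η_m^Y = ∑_y (c_y / g_y) 1_{Y = y}`. Since `c_y / g_y` is `ℱ m`-measurable, the defining property
of `g_y` turns `∫_s (c_y / g_y) 1_{Y = y}` into `∫_s (c_y / g_y) g_y = c_y P(s)` for `s ∈ ℱ m`, and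
summing over `y` gives `P(s)`. Working with Lebesgue integrals of nonnegative functions, pulling
out the measurable factor and exchanging sum and integral need no integrability; the Bochner
conditional expectation is recovered at the end.
-/

open MeasureTheory Filter Set

open scoped ENNReal

namespace MeasureTheory

variable {Ω : Type*} {m mΩ : MeasurableSpace Ω} {μ : Measure Ω}

theorem lintegral_mul_condLExp (hm : m ≤ mΩ) [SigmaFinite (μ.trim hm)] {X f : Ω → ℝ≥0∞}
    (hX : AEMeasurable X μ) (hf : Measurable[m] f) :
    ∫⁻ ω, X ω * f ω ∂μ = ∫⁻ ω, μ⁻[X|m] ω * f ω ∂μ := by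
  have hf₀ : Measurable f := hf.mono hm le_rfl
  have htrim : (μ.withDensity X).trim hm = (μ.withDensity μ⁻[X|m]).trim hm := by
    refine @Measure.ext _ m _ _ fun s hs => ?_
    rw [trim_measurableSet_eq hm hs, trim_measurableSet_eq hm hs, withDensity_apply _ (hm s hs),
      withDensity_apply _ (hm s hs), setLIntegral_condLExp hm μ X hs]
  calc ∫⁻ ω, X ω * f ω ∂μ = ∫⁻ ω, f ω ∂(μ.withDensity X).trim hm := by
        rw [lintegral_trim hm hf, lintegral_withDensity_eq_lintegral_mul₀ hX hf₀.aemeasurable]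
        rfl
    _ = ∫⁻ ω, μ⁻[X|m] ω * f ω ∂μ := by
        rw [htrim, lintegral_trim hm hf, lintegral_withDensity_eq_lintegral_mul₀
          (measurable_condLExp' m μ X).aemeasurable hf₀.aemeasurable]
        rfl

theorem setLIntegral_eq_lintegral_ofReal_condExp_indicator (hm : m ≤ mΩ) [IsFiniteMeasure μ]
    {S : Set Ω} (hS : MeasurableSet S) {f : Ω → ℝ≥0∞} (hf : Measurable[m] f) :
    ∫⁻ ω in S, f ω ∂μ =
      ∫⁻ ω, ENNReal.ofReal (μ[S.indicator (fun _ => (1 : ℝ)) | m] ω) * f ω ∂μ := by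
  have hI : Integrable (S.indicator fun _ => (1 : ℝ)) μ := (integrable_const 1).indicator hS
  calc ∫⁻ ω in S, f ω ∂μ
      = ∫⁻ ω, ENNReal.ofReal (S.indicator (fun _ => (1 : ℝ)) ω) * f ω ∂μ := by
        rw [← lintegral_indicator hS]
        congr 1 with ω
        by_cases hω : ω ∈ S <;> simp [hω]
    _ = ∫⁻ ω, μ⁻[fun ω => ENNReal.ofReal (S.indicator (fun _ => (1 : ℝ)) ω) | m] ω * f ω ∂μ :=
        lintegral_mul_condLExp hm hI.1.aemeasurable.ennreal_ofReal hf
    _ = _ := by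
        refine lintegral_congr_ae ?_
        filter_upwards [condLExp_ofReal m hI (ae_of_all _ fun ω => indicator_nonneg (by simp) ω)]
          with ω hω
        rw [hω]

theorem setLIntegral_indicator_div_condExp_indicator (hm : m ≤ mΩ) [IsFiniteMeasure μ]
    {S s : Set Ω} (hS : MeasurableSet S) (hs : MeasurableSet[m] s)
    (hpos : ∀ᵐ ω ∂μ, 0 < μ[S.indicator (fun _ => (1 : ℝ)) | m] ω) :
    ∫⁻ ω in s, S.indicator
      (fun ω => ENNReal.ofReal ((μ S).toReal / μ[S.indicator (fun _ => (1 : ℝ)) | m] ω)) ω ∂μ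
      = μ S * μ s := by
  set g := μ[S.indicator (fun _ => (1 : ℝ)) | m]
  have hg : Measurable[m] g := stronglyMeasurable_condExp.measurable
  rw [setLIntegral_indicator hS, inter_comm, ← Measure.restrict_restrict (hm s hs),
    ← lintegral_indicator (hm s hs),
    setLIntegral_eq_lintegral_ofReal_condExp_indicator hm hS
      (((hg.const_div _).ennreal_ofReal).indicator hs), ← lintegral_indicator_const (hm s hs)]
  refine lintegral_congr_ae ?_
  filter_upwards [hpos] with ω hω
  by_cases hωs : ω ∈ s
  · rw [indicator_of_mem hωs, indicator_of_mem hωs, ← ENNReal.ofReal_mul hω.le,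
      mul_div_cancel₀ _ hω.ne', ENNReal.ofReal_toReal (measure_ne_top μ S)]
  · simp [hωs]

end MeasureTheory

theorem tsum_indicator_fiber {Ω E M : Type*} [AddCommMonoid M] [TopologicalSpace M]
    (Y : Ω → E) (h : E → Ω → M) (ω : Ω) :
    ∑' y, {ω' | Y ω' = y}.indicator (h y) ω = h (Y ω) ω := by
  rw [tsum_eq_single (Y ω) fun y hy => indicator_of_notMem (fun hω => hy hω.symm) (h y)]
  exact indicator_of_mem (show ω ∈ {ω' | Y ω' = Y ω} from rfl) (h (Y ω))

theorem tsum_measure_fiber {Ω E : Type*} {mΩ : MeasurableSpace Ω} [Countable E]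
    {μ : Measure Ω} {Y : Ω → E} (hY : ∀ y, MeasurableSet {ω | Y ω = y}) :
    ∑' y, μ {ω | Y ω = y} = μ univ := by
  rw [← measure_iUnion (f := fun y => {ω | Y ω = y}) (pairwise_disjoint_fiber Y) hY,
    iUnion_eq_univ_iff.2 fun ω => ⟨Y ω, rfl⟩]

section condDensity

variable {Ω E : Type*} {mΩ : MeasurableSpace Ω} {P : Measure Ω} {ℱ : ℕ → MeasurableSpace Ω}
  {Y : Ω → E} {m : ℕ}

theorem inv_condDensity (y : E) (ω : Ω) :
    (condDensity P ℱ Y m y ω)⁻¹ =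
      (P {ω' | Y ω' = y}).toReal / P[{ω' | Y ω' = y}.indicator (fun _ => (1 : ℝ)) | ℱ m] ω :=
  inv_div _ _

theorem measurable_ofReal_inv_condDensity (hm : ℱ m ≤ mΩ) (y : E) :
    Measurable fun ω => ENNReal.ofReal (condDensity P ℱ Y m y ω)⁻¹ :=
  ((stronglyMeasurable_condExp.measurable.mono hm le_rfl).div_const _).inv.ennreal_ofReal

theorem measurable_ofReal_inv_condDensity_comp [Countable E] (hm : ℱ m ≤ mΩ)
    (hY : ∀ y, MeasurableSet {ω | Y ω = y}) :
    Measurable fun ω => ENNReal.ofReal (condDensity P ℱ Y m (Y ω) ω)⁻¹ := by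
  simp_rw [← tsum_indicator_fiber Y (fun y ω => ENNReal.ofReal (condDensity P ℱ Y m y ω)⁻¹)]
  exact Measurable.tsum fun y => (measurable_ofReal_inv_condDensity hm y).indicator (hY y)

theorem condExp_indicator_pos_of_condDensity_pos {y : E} {ω : Ω}
    (hη : 0 < condDensity P ℱ Y m y ω) :
    0 < P[{ω' | Y ω' = y}.indicator (fun _ => (1 : ℝ)) | ℱ m] ω := by
  have hc : 0 < (P {ω' | Y ω' = y}).toReal :=
    ENNReal.toReal_nonneg.lt_of_ne fun hc => by simp [condDensity, ← hc] at hη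
  exact (div_pos_iff_of_pos_right hc).1 hη

theorem setLIntegral_ofReal_inv_condDensity [Countable E] [IsProbabilityMeasure P]
    (hm : ℱ m ≤ mΩ) (hY : ∀ y, MeasurableSet {ω | Y ω = y})
    (hη : ∀ y ∈ range Y, ∀ᵐ ω ∂P, 0 < condDensity P ℱ Y m y ω)
    {s : Set Ω} (hs : MeasurableSet[ℱ m] s) :
    ∫⁻ ω in s, ENNReal.ofReal (condDensity P ℱ Y m (Y ω) ω)⁻¹ ∂P = P s := by
  have hfiber (y : E) : ∫⁻ ω in s, {ω' | Y ω' = y}.indicator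
      (fun ω => ENNReal.ofReal (condDensity P ℱ Y m y ω)⁻¹) ω ∂P = P {ω | Y ω = y} * P s := by
    by_cases hy : y ∈ range Y
    · simp_rw [inv_condDensity]
      exact setLIntegral_indicator_div_condExp_indicator hm (hY y) hs
        ((hη y hy).mono fun ω => condExp_indicator_pos_of_condDensity_pos)
    · have hempty : {ω | Y ω = y} = ∅ := eq_empty_of_forall_notMem fun ω hω => hy ⟨ω, hω⟩
      simp [hempty]
  simp_rw [← tsum_indicator_fiber Y (fun y ω => ENNReal.ofReal (condDensity P ℱ Y m y ω)⁻¹)]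
  rw [lintegral_tsum fun y =>
      ((measurable_ofReal_inv_condDensity hm y).indicator (hY y)).aemeasurable,
    tsum_congr hfiber, ENNReal.tsum_mul_right, tsum_measure_fiber hY, measure_univ, one_mul]

end condDensity

theorem stmt1_general {Ω E : Type*} {mΩ : MeasurableSpace Ω} [Countable E]
    (P : Measure Ω) [IsProbabilityMeasure P] (n : ℕ)
    (ℱ : ℕ → MeasurableSpace Ω) (hle : ∀ m, ℱ m ≤ mΩ)
    (Y : Ω → E) (hY : @Measurable Ω E (ℱ n) ⊤ Y)
    (hη : ∀ m, m < n → ∀ y ∈ Set.range Y, ∀ᵐ ω ∂P, 0 < condDensity P ℱ Y m y ω) :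
    ∀ m, m < n →
      P[fun ω => (condDensity P ℱ Y m (Y ω) ω)⁻¹ | ℱ m]
        =ᵐ[P] fun _ => (1 : ℝ) := by
  intro m hm
  have hfiber (y : E) : MeasurableSet {ω | Y ω = y} :=
    hle n _ (@hY {y} MeasurableSpace.measurableSet_top)
  have hlin {s : Set Ω} (hs : MeasurableSet[ℱ m] s) :=
    setLIntegral_ofReal_inv_condDensity (hle m) hfiber (hη m hm) hs
  have hnonneg : ∀ᵐ ω ∂P, 0 ≤ (condDensity P ℱ Y m (Y ω) ω)⁻¹ := by
    filter_upwards [(ae_ball_iff (range Y).to_countable).2 (hη m hm)] with ω hω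
    exact inv_nonneg.2 (hω (Y ω) ⟨ω, rfl⟩).le
  have hcondLExp : (fun _ => (1 : ℝ≥0∞)) =ᵐ[P]
      P⁻[fun ω => ENNReal.ofReal (condDensity P ℱ Y m (Y ω) ω)⁻¹ | ℱ m] :=
    ae_eq_condLExp (hle m) P _ measurable_const fun s hs => by rw [setLIntegral_one, hlin hs]
  have hfinite : ∫⁻ ω, ENNReal.ofReal (condDensity P ℱ Y m (Y ω) ω)⁻¹ ∂P ≠ ⊤ := by
    rw [← setLIntegral_univ, hlin MeasurableSet.univ]
    exact measure_ne_top P univ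
  calc P[fun ω => (condDensity P ℱ Y m (Y ω) ω)⁻¹ | ℱ m]
      =ᵐ[P] P[fun ω => (ENNReal.ofReal (condDensity P ℱ Y m (Y ω) ω)⁻¹).toReal | ℱ m] :=
        condExp_congr_ae (hnonneg.mono fun ω hω => (ENNReal.toReal_ofReal hω).symm)
    _ =ᵐ[P] fun ω => (P⁻[fun ω => ENNReal.ofReal (condDensity P ℱ Y m (Y ω) ω)⁻¹ | ℱ m] ω).toReal :=
        (toReal_condLExp (ℱ m)
          (measurable_ofReal_inv_condDensity_comp (hle m) hfiber).aemeasurable hfinite).symm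
    _ =ᵐ[P] fun _ => (1 : ℝ) := hcondLExp.mono fun ω hω => by simp [← hω]

/-- For every `0 ≤ m < n`, one has `E_P[1/η_m^{Y} | ℱ m] = 1` `P`-almost surely. -/
theorem stmt1 {Ω E : Type*} {mΩ : MeasurableSpace Ω} [Countable E]
    (P : Measure Ω) [IsProbabilityMeasure P] (n : ℕ)
    (ℱ : ℕ → MeasurableSpace Ω) (hmono : Monotone ℱ) (hle : ∀ m, ℱ m ≤ mΩ)
    (Y : Ω → E) (hY : @Measurable Ω E (ℱ n) ⊤ Y)
    (hYpos : ∀ y ∈ Set.range Y, 0 < P {ω | Y ω = y})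
    (hη : ∀ m, m < n → ∀ y ∈ Set.range Y, ∀ᵐ ω ∂P, 0 < condDensity P ℱ Y m y ω) :
    ∀ m, m < n →
      P[fun ω => (condDensity P ℱ Y m (Y ω) ω)⁻¹ | ℱ m]
        =ᵐ[P] fun _ => (1 : ℝ) :=
  stmt1_general P n ℱ hle Y hY hη
end

section
/- Let (X_k)_{k≥1} be independent random variables with P[X_k = 1] = P[X_k = -1] = 1/2, let S_0 = 0, S_m = X_1 + ... + X_m, and let Y_n = max_{0 ≤ m ≤ n} S_m. Then for every integer y with 0 ≤ y ≤ n, P[Y_n = y] = C(n, ⌊(n + y + 1)/2⌋) · 2^{-n}, where C(n,k) denotes the binomial coefficient. -/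
/-!
Conditioning on the first step, the maximum of a walk of length `n + 1` is
`max 0 (X₁ + M')`, where `M'` is the maximum of the walk of the remaining `n` steps. Hence the
number of `±1` step vectors with maximum `y` satisfies `c (n+1) y = c n (y-1) + c n (y+1)` for
`y > 0` and `c (n+1) 0 = c n 0 + c n 1`, which Pascal's rule solves by
`c n y = C(n, ⌊(n+y+1)/2⌋)`. Independence makes the first `n` steps uniformly distributed on
`{±1}ⁿ` (the other values are null events), so each step vector has probability `2⁻ⁿ`.
-/

open MeasureTheory Finset

def walkMax (n : ℕ) (g : ℕ → ℤ) : ℤ :=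
  (range (n + 1)).sup' nonempty_range_add_one fun m => ∑ j ∈ range m, g j

theorem walkMax_nonneg (n : ℕ) (g : ℕ → ℤ) : 0 ≤ walkMax n g :=
  le_sup'_of_le _ (mem_range.2 n.succ_pos) (by simp)

theorem walkMax_congr {n : ℕ} {g g' : ℕ → ℤ} (h : ∀ j < n, g j = g' j) :
    walkMax n g = walkMax n g' :=
  sup'_congr _ rfl fun _ hm => sum_congr rfl fun j hj =>
    h j ((mem_range.1 hj).trans_le (Nat.lt_succ_iff.1 (mem_range.1 hm)))

theorem walkMax_zero (g : ℕ → ℤ) : walkMax 0 g = 0 := by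
  simp [walkMax]

theorem walkMax_succ (n : ℕ) (g : ℕ → ℤ) :
    walkMax (n + 1) g = max 0 (g 0 + walkMax n fun j => g (j + 1)) := by
  simp only [walkMax]
  rw [sup'_congr _ (range_add_one' (n + 1)) fun _ _ => rfl, sup'_insert, sup'_map, add_sup']
  · congr 2
    ext m
    exact (sum_range_succ' _ m).trans (add_comm _ _)
  · simp

theorem walkMax_extend_cons (n : ℕ) (a : ℤ) (w : Fin n → ℤ) :
    walkMax (n + 1) (Function.extend Fin.val (Fin.cons a w : Fin (n + 1) → ℤ) 0) =
      max 0 (a + walkMax n (Function.extend Fin.val w 0)) := by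
  rw [walkMax_succ]
  congr 2
  · exact Fin.val_injective.extend_apply _ _ (0 : Fin (n + 1))
  · refine walkMax_congr fun j hj => ?_
    rw [Fin.val_injective.extend_apply _ _ (⟨j, hj⟩ : Fin n)]
    exact Fin.val_injective.extend_apply _ _ (Fin.succ ⟨j, hj⟩)

abbrev signVectors (ι : Type*) [Fintype ι] [DecidableEq ι] : Finset (ι → ℤ) :=
  Fintype.piFinset fun _ => {1, -1}

-- `Function.extend Fin.val v 0` is the step sequence `v` continued by zeros after time `n`.
noncomputable def walkMaxCount (n : ℕ) (y : ℤ) : ℕ :=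
  #{v ∈ signVectors (Fin n) | walkMax n (Function.extend Fin.val v 0) = y}

theorem Finset.card_filter_piFinset_succ {n : ℕ} {α : Fin (n + 1) → Type*}
    (S : ∀ i, Finset (α i)) (P : (∀ i, α i) → Prop) [DecidablePred P] :
    #{r ∈ Fintype.piFinset S | P r} =
      ∑ a ∈ S 0, #{w ∈ Fintype.piFinset (Fin.tail S) | P (Fin.cons a w)} := by
  have h := map_consEquiv_filter_piFinset S (fun _ => True)
  simp only [filter_true_of_mem (fun _ _ => trivial)] at h
  simp only [card_filter]
  rw [← sum_product' (f := fun a w => if P (Fin.cons a w) then 1 else 0), ← h, sum_map]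
  simp

theorem walkMaxCount_succ (n : ℕ) (y : ℤ) :
    walkMaxCount (n + 1) y =
      #{w ∈ signVectors (Fin n) | max 0 (1 + walkMax n (Function.extend Fin.val w 0)) = y} +
      #{w ∈ signVectors (Fin n) | max 0 (-1 + walkMax n (Function.extend Fin.val w 0)) = y} := by
  rw [walkMaxCount, card_filter_piFinset_succ, sum_pair (by decide)]
  simp only [walkMax_extend_cons]
  rfl

theorem walkMaxCount_succ_of_pos (n : ℕ) {y : ℤ} (hy : 0 < y) :
    walkMaxCount (n + 1) y = walkMaxCount n (y - 1) + walkMaxCount n (y + 1) := by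
  rw [walkMaxCount_succ, walkMaxCount, walkMaxCount]
  congr 1 <;> refine congrArg _ (filter_congr fun w _ => ?_) <;>
    have := walkMax_nonneg n (Function.extend Fin.val w 0) <;> omega

theorem walkMaxCount_succ_zero (n : ℕ) :
    walkMaxCount (n + 1) 0 = walkMaxCount n 0 + walkMaxCount n 1 := by
  have h_up : #{w ∈ signVectors (Fin n) |
      max 0 (1 + walkMax n (Function.extend Fin.val w 0)) = 0} = 0 :=
    card_eq_zero.2 <| filter_false_of_mem fun w _ => by
      have := walkMax_nonneg n (Function.extend Fin.val w 0); omega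
  rw [walkMaxCount_succ, h_up, zero_add, walkMaxCount, walkMaxCount,
    ← card_union_of_disjoint (disjoint_filter.2 fun _ _ h => by rw [h]; decide), ← filter_or]
  refine congrArg _ (filter_congr fun w _ => ?_)
  have := walkMax_nonneg n (Function.extend Fin.val w 0)
  omega

theorem Nat.add_one_choose_add_two_div_two (n : ℕ) :
    (n + 1).choose ((n + 2) / 2) = n.choose ((n + 1) / 2) + n.choose ((n + 2) / 2) := by
  obtain ⟨m, rfl | rfl⟩ := n.even_or_odd'
  · rw [show (2 * m + 2) / 2 = m + 1 by omega, show (2 * m + 1) / 2 = m by omega,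
      Nat.choose_succ_succ]
  · rw [show (2 * m + 1 + 2) / 2 = m + 1 by omega, show (2 * m + 1 + 1) / 2 = m + 1 by omega,
      Nat.choose_succ_succ, ← Nat.choose_symm_of_eq_add (by omega : 2 * m + 1 = m + (m + 1))]

theorem walkMaxCount_eq_choose (n y : ℕ) : walkMaxCount n y = n.choose ((n + y + 1) / 2) := by
  induction n generalizing y with
  | zero =>
    rcases y with _ | y
    · simp [walkMaxCount, walkMax_zero]
    · simp only [walkMaxCount, walkMax_zero]
      rw [filter_false_of_mem fun _ _ => by omega, card_empty, Nat.choose_eq_zero_of_lt (by omega)]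
  | succ n ih =>
    rcases y with _ | y
    · have h0 := ih 0
      have h1 := ih 1
      push_cast at h0 h1
      rw [Nat.cast_zero, walkMaxCount_succ_zero, h0, h1, Nat.add_one_choose_add_two_div_two]
    · have h2 := ih (y + 2)
      push_cast at h2
      rw [Nat.cast_succ, walkMaxCount_succ_of_pos n (by positivity), add_sub_cancel_right,
        add_assoc, one_add_one_eq_two, ih y, h2,
        show (n + (y + 2) + 1) / 2 = (n + y + 1) / 2 + 1 by omega,
        show (n + 1 + (y + 1) + 1) / 2 = (n + y + 1) / 2 + 1 by omega, Nat.choose_succ_succ]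

section SignVariables

variable {Ω : Type*} {mΩ : MeasurableSpace Ω} {P : Measure Ω} [IsProbabilityMeasure P]

theorem measure_preimage_singleton_of_sign {Y : Ω → ℤ} (hY : Measurable Y)
    (hdist : P {ω | Y ω = 1} = 1 / 2 ∧ P {ω | Y ω = -1} = 1 / 2) (a : ℤ) :
    P (Y ⁻¹' {a}) = if a ∈ ({1, -1} : Finset ℤ) then 2⁻¹ else 0 := by
  split_ifs with ha
  · obtain rfl | rfl : a = 1 ∨ a = -1 := by simpa using ha
    · exact hdist.1.trans (one_div 2)
    · exact hdist.2.trans (one_div 2)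
  · have h_sign : P (Y ⁻¹' ↑({1, -1} : Finset ℤ)) = 1 := by
      rw [← sum_measure_preimage_singleton _ fun b _ => hY (measurableSet_singleton b),
        sum_pair (by decide)]
      change P {ω | Y ω = 1} + P {ω | Y ω = -1} = 1
      rw [hdist.1, hdist.2, ENNReal.add_halves]
    refine measure_mono_null (fun ω hω => ?_) ((prob_compl_eq_zero_iff (hY ?_)).2 h_sign)
    · simp_all
    · exact Finset.measurableSet _

theorem measure_preimage_eq_card_signVectors_div {ι : Type*} [Fintype ι] [DecidableEq ι]
    {Y : ι → Ω → ℤ} (hY : ∀ i, Measurable (Y i)) (hindep : ProbabilityTheory.iIndepFun Y P)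
    (hdist : ∀ i, P {ω | Y i ω = 1} = 1 / 2 ∧ P {ω | Y i ω = -1} = 1 / 2)
    (A : Set (ι → ℤ)) [DecidablePred (· ∈ A)] :
    P ((fun ω i => Y i ω) ⁻¹' A) = #{v ∈ signVectors ι | v ∈ A} / 2 ^ Fintype.card ι := by
  have h_point (v : ι → ℤ) : P ((fun ω i => Y i ω) ⁻¹' {v}) =
      if v ∈ signVectors ι then (2 ^ Fintype.card ι)⁻¹ else 0 := by
    have : (fun ω i => Y i ω) ⁻¹' {v} = ⋂ i ∈ (univ : Finset ι), Y i ⁻¹' {v i} := by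
      ext ω; simp [funext_iff]
    rw [this, hindep.measure_inter_preimage_eq_mul _ fun i _ => measurableSet_singleton (v i)]
    simp only [measure_preimage_singleton_of_sign (hY _) (hdist _), prod_ite_zero, prod_const,
      card_univ, ENNReal.inv_pow, Fintype.mem_piFinset, mem_univ, true_implies]
  rw [← tsum_measure_preimage_singleton (Set.to_countable A)
      fun v _ => measurableSet_preimage (by fun_prop) (measurableSet_singleton v),
    tsum_subtype A fun v => P ((fun ω i => Y i ω) ⁻¹' {v}),
    tsum_eq_sum (s := signVectors ι) fun v hv => by
      simp only [Set.indicator_apply, h_point, if_neg hv, ite_self],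
    sum_congr rfl fun v hv => by rw [Set.indicator_apply, h_point, if_pos hv], ← sum_filter,
    sum_const, nsmul_eq_mul, div_eq_mul_inv]

end SignVariables

/-- Distribution of the running maximum of the simple symmetric random walk:
`P[Y_n = y] = C(n, ⌊(n + y + 1)/2⌋) · 2^{-n}` for `0 ≤ y ≤ n`. -/
theorem stmt4 {Ω : Type*} {mΩ : MeasurableSpace Ω} (P : Measure Ω) [IsProbabilityMeasure P]
    (X : ℕ → Ω → ℤ) (hmeas : ∀ k, Measurable (X k))
    (hindep : ProbabilityTheory.iIndepFun X P)
    (hdist : ∀ k, P {ω | X k ω = 1} = 1 / 2 ∧ P {ω | X k ω = -1} = 1 / 2)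
    (n : ℕ) :
    ∀ y : ℕ, y ≤ n →
      P {ω | (Finset.range (n + 1)).sup' Finset.nonempty_range_add_one
            (fun m => ∑ j ∈ Finset.range m, X (j + 1) ω) = (y : ℤ)} =
        (n.choose ((n + y + 1) / 2) : ENNReal) / 2 ^ n := by
  intro y _
  classical
  have h_event : {ω | walkMax n (fun j => X (j + 1) ω) = y} =
      (fun ω (i : Fin n) => X (i + 1) ω) ⁻¹' {v | walkMax n (Function.extend Fin.val v 0) = y} := by
    ext ω
    exact Eq.congr_left <| walkMax_congr fun j hj =>
      (Fin.val_injective.extend_apply (fun i : Fin n => X (i + 1) ω) 0 ⟨j, hj⟩).symm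
  change P {ω | walkMax n (fun j => X (j + 1) ω) = y} = _
  rw [h_event, measure_preimage_eq_card_signVectors_div (Y := fun i : Fin n => X (i + 1))
      (fun _ => hmeas _) (hindep.precomp ((add_left_injective 1).comp Fin.val_injective))
      (fun _ => hdist _), Fintype.card_fin]
  exact congrArg (fun c : ℕ => (c : ENNReal) / 2 ^ n) (walkMaxCount_eq_choose n y)
end

section
/- Let U be a utility function with lim_{x→∞} U(x) > 0, lim_{x→0+} U(x) < 0, and asymptotic elasticity AE(U) := limsup_{x→∞} x U′(x) / U(x) < 1. Then there exist constants L > 0 and α > 0 such that the convex conjugate V satisfies V(y) ≤ L y^{-α} for all y ∈ (0, ∞). -/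
open MeasureTheory Filter Set Topology

/-- The convex conjugate `V(y) = sup_{x > 0} (U(x) − x y)` of a utility function `U`. -/
noncomputable def legendreConj (U : ℝ → ℝ) (y : ℝ) : ℝ :=
  sSup ((fun x => U x - x * y) '' Set.Ioi (0 : ℝ))

/-!
Concavity gives `x U'(x) ≤ 2 (U(x) - U(x/2)) ≤ 2 U(x)` for large `x`, so the elasticity is bounded
above and `AE(U) < 1` yields `γ ∈ (0, 1)` with `x U'(x) ≤ γ U(x)` for large `x`. Then `U(x) x^{-γ}`
is eventually nonincreasing, so `U` grows at most like `x^γ`. As `U < 0` near `0` and `U` is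
increasing, this gives a global bound `U(x) ≤ K x^γ` on `(0, ∞)`, and the conjugate of `K x^γ` is
of order `y^{-γ/(1-γ)}`.
-/

lemma legendreConj_le {U : ℝ → ℝ} {y M : ℝ} (h : ∀ x > 0, U x - x * y ≤ M) :
    legendreConj U y ≤ M :=
  csSup_le (nonempty_Ioi.image _) (forall_mem_image.2 h)

lemma mul_rpow_sub_mul_le {K γ x y : ℝ} (hK : 0 ≤ K) (hγ0 : 0 < γ) (hγ1 : γ < 1)
    (hx : 0 < x) (hy : 0 < y) :
    K * x ^ γ - x * y ≤ K * (K / y) ^ (γ / (1 - γ)) := by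
  -- Split at the maximiser `x = (K / y) ^ (1 / (1 - γ))` of the left-hand side.
  rcases le_or_gt (x ^ (1 - γ)) (K / y) with hsmall | hlarge
  · have hxγ : x ^ γ = (x ^ (1 - γ)) ^ (γ / (1 - γ)) := by
      rw [← Real.rpow_mul hx.le]
      congr 1
      field_simp [(sub_pos.2 hγ1).ne']
    have : x ^ γ ≤ (K / y) ^ (γ / (1 - γ)) := by
      rw [hxγ]
      exact Real.rpow_le_rpow (by positivity) hsmall (div_pos hγ0 (sub_pos.2 hγ1)).le
    linarith [mul_le_mul_of_nonneg_left this hK, mul_pos hx hy]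
  · have hsplit : y * x ^ (1 - γ) * x ^ γ = x * y := by
      rw [mul_assoc, ← Real.rpow_add hx, sub_add_cancel, Real.rpow_one, mul_comm]
    have : K * x ^ γ ≤ y * x ^ (1 - γ) * x ^ γ :=
      mul_le_mul_of_nonneg_right ((div_lt_iff₀' hy).1 hlarge).le (Real.rpow_pos_of_pos hx γ).le
    have hRHS : 0 ≤ K * (K / y) ^ (γ / (1 - γ)) := by positivity
    linarith

lemma legendreConj_le_of_le_mul_rpow {U : ℝ → ℝ} {K γ : ℝ} (hK : 0 ≤ K) (hγ0 : 0 < γ)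
    (hγ1 : γ < 1) (hU : ∀ x > 0, U x ≤ K * x ^ γ) {y : ℝ} (hy : 0 < y) :
    legendreConj U y ≤ K * K ^ (γ / (1 - γ)) * y ^ (-(γ / (1 - γ))) := by
  have hconj : K * (K / y) ^ (γ / (1 - γ)) = K * K ^ (γ / (1 - γ)) * y ^ (-(γ / (1 - γ))) := by
    rw [Real.div_rpow hK hy.le, Real.rpow_neg hy.le, div_eq_mul_inv, mul_assoc]
  refine legendreConj_le fun x hx => ?_
  rw [← hconj]
  linarith [hU x hx, mul_rpow_sub_mul_le hK hγ0 hγ1 hx hy]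

lemma ConcaveOn.mul_deriv_le_two_mul_sub {U : ℝ → ℝ} (hU : ConcaveOn ℝ (Ioi 0) U) {x : ℝ}
    (hx : 0 < x) (hd : DifferentiableAt ℝ U x) :
    x * deriv U x ≤ 2 * (U x - U (x / 2)) := by
  have hslope := hU.deriv_le_slope (half_pos hx) hx (half_lt_self hx) hd
  rw [slope_def_field, le_div_iff₀ (by linarith)] at hslope
  linarith

lemma ConcaveOn.isBoundedUnder_mul_deriv_div {U : ℝ → ℝ} (hU : ConcaveOn ℝ (Ioi 0) U)
    (hd : ∀ x > 0, DifferentiableAt ℝ U x) (hpos : ∀ᶠ x in atTop, 0 < U x) :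
    IsBoundedUnder (· ≤ ·) atTop (fun x => x * deriv U x / U x) := by
  refine ⟨2, eventually_map.2 ?_⟩
  filter_upwards [hpos, (tendsto_id.atTop_div_const two_pos).eventually hpos,
    eventually_gt_atTop 0] with x hUx (hUhalf : 0 < U (x / 2)) hx
  rw [div_le_iff₀ hUx]
  linarith [hU.mul_deriv_le_two_mul_sub hx (hd x hx)]

lemma exists_eventually_mul_deriv_le {U : ℝ → ℝ} (hpos : ∀ᶠ x in atTop, 0 < U x)
    (hbdd : IsBoundedUnder (· ≤ ·) atTop (fun x => x * deriv U x / U x))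
    (hAE : limsup (fun x => x * deriv U x / U x) atTop < 1) :
    ∃ γ ∈ Ioo (0 : ℝ) 1, ∀ᶠ x in atTop, x * deriv U x ≤ γ * U x := by
  obtain ⟨γ, hγ, hγ1⟩ := exists_between (max_lt hAE one_pos)
  refine ⟨γ, ⟨(le_max_right _ _).trans_lt hγ, hγ1⟩, ?_⟩
  filter_upwards [eventually_lt_of_limsup_lt ((le_max_left _ _).trans_lt hγ) hbdd, hpos]
    with x hx hUx
  exact ((div_lt_iff₀ hUx).1 hx).le

lemma le_mul_div_rpow_of_mul_deriv_le {U : ℝ → ℝ} {γ x₀ : ℝ} (hx₀ : 0 < x₀)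
    (hd : ∀ x ≥ x₀, DifferentiableAt ℝ U x) (hder : ∀ x ≥ x₀, x * deriv U x ≤ γ * U x)
    {x : ℝ} (hx : x₀ ≤ x) :
    U x ≤ U x₀ * (x / x₀) ^ γ := by
  have hg : ∀ t ≥ x₀, HasDerivAt (fun t => U t * t ^ (-γ))
      (deriv U t * t ^ (-γ) + U t * (-γ * t ^ (-γ - 1))) t := fun t ht =>
    (hd t ht).hasDerivAt.mul (Real.hasDerivAt_rpow_const (Or.inl (hx₀.trans_le ht).ne'))
  have hanti : AntitoneOn (fun t => U t * t ^ (-γ)) (Ici x₀) := by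
    refine antitoneOn_of_hasDerivWithinAt_nonpos (convex_Ici x₀)
      (f' := fun t => deriv U t * t ^ (-γ) + U t * (-γ * t ^ (-γ - 1)))
      (fun t ht => (hg t ht).continuousAt.continuousWithinAt) (fun t ht => ?_) fun t ht => ?_
    · rw [interior_Ici] at ht
      exact (hg t (le_of_lt ht)).hasDerivWithinAt
    · rw [interior_Ici] at ht
      have ht0 : 0 < t := hx₀.trans ht
      have hfactor : deriv U t * t ^ (-γ) + U t * (-γ * t ^ (-γ - 1))
          = t ^ (-γ - 1) * (t * deriv U t - γ * U t) := by
        rw [Real.rpow_sub_one ht0.ne']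
        field_simp
        ring
      rw [hfactor]
      exact mul_nonpos_of_nonneg_of_nonpos (Real.rpow_pos_of_pos ht0 _).le
        (sub_nonpos.2 (hder t ht.le))
  have hxpos : 0 < x := hx₀.trans_le hx
  have hle := hanti (le_refl x₀) hx hx
  simp only [Real.rpow_neg hxpos.le, Real.rpow_neg hx₀.le, ← div_eq_mul_inv] at hle
  rw [div_le_iff₀ (Real.rpow_pos_of_pos hxpos γ)] at hle
  rw [Real.div_rpow hxpos.le hx₀.le]
  linarith [show U x₀ / x₀ ^ γ * x ^ γ = U x₀ * (x ^ γ / x₀ ^ γ) by ring]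

lemma MonotoneOn.le_mul_div_rpow {U : ℝ → ℝ} {γ δ x₀ : ℝ} (hmono : MonotoneOn U (Ioi 0))
    (hγ : 0 ≤ γ) (hδ : 0 < δ) (hδx₀ : δ ≤ x₀) (hUδ : U δ ≤ 0) (hUx₀ : 0 ≤ U x₀)
    (hgrowth : ∀ x ≥ x₀, U x ≤ U x₀ * (x / x₀) ^ γ) {x : ℝ} (hx : 0 < x) :
    U x ≤ U x₀ * (x / δ) ^ γ := by
  have hRHS : 0 ≤ U x₀ * (x / δ) ^ γ := by positivity
  rcases le_total x δ with hxδ | hδx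
  · linarith [hmono hx hδ hxδ]
  rcases le_total x x₀ with hxx₀ | hx₀x
  · calc U x ≤ U x₀ := hmono hx (hδ.trans_le hδx₀) hxx₀
      _ ≤ U x₀ * (x / δ) ^ γ :=
        le_mul_of_one_le_right hUx₀ (Real.one_le_rpow ((one_le_div hδ).2 hδx) hγ)
  · calc U x ≤ U x₀ * (x / x₀) ^ γ := hgrowth x hx₀x
      _ ≤ U x₀ * (x / δ) ^ γ := by
        have hxx₀ : x / x₀ ≤ x / δ := div_le_div_of_nonneg_left hx.le hδ hδx₀
        exact mul_le_mul_of_nonneg_left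
          (Real.rpow_le_rpow (div_pos hx (hδ.trans_le hδx₀)).le hxx₀ hγ) hUx₀

theorem stmt9_general (U : ℝ → ℝ)
    (hmono : StrictMonoOn U (Set.Ioi 0))
    (hconc : StrictConcaveOn ℝ (Set.Ioi 0) U)
    (hsmooth : ContDiffOn ℝ 2 U (Set.Ioi 0))
    (hUtop : ∃ l : EReal, Tendsto (fun x => (U x : EReal)) atTop (𝓝 l) ∧ 0 < l)
    (hU0 : ∃ l : EReal, Tendsto (fun x => (U x : EReal)) (nhdsWithin 0 (Set.Ioi 0)) (𝓝 l) ∧ l < 0)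
    (hAE : Filter.limsup (fun x => x * deriv U x / U x) atTop < 1) :
    ∃ L > (0 : ℝ), ∃ α > (0 : ℝ), ∀ y > (0 : ℝ), legendreConj U y ≤ L * y ^ (-α) := by
  have hd : ∀ x > 0, DifferentiableAt ℝ U x := fun x hx =>
    (hsmooth.contDiffAt (Ioi_mem_nhds hx)).differentiableAt (by norm_num)
  obtain ⟨l, hl, hlpos⟩ := hUtop
  have hpos : ∀ᶠ x in atTop, 0 < U x := by
    filter_upwards [hl.eventually_const_lt hlpos] with x hx using EReal.coe_pos.mp hx
  obtain ⟨γ, ⟨hγ0, hγ1⟩, hγ⟩ := exists_eventually_mul_deriv_le hpos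
    (hconc.concaveOn.isBoundedUnder_mul_deriv_div hd hpos) hAE
  obtain ⟨x₀, hx₀⟩ := eventually_atTop.1 (hγ.and (hpos.and (eventually_gt_atTop 0)))
  obtain ⟨-, hUx₀, hx₀pos⟩ := hx₀ x₀ le_rfl
  have hgrowth : ∀ x ≥ x₀, U x ≤ U x₀ * (x / x₀) ^ γ := fun x hx =>
    le_mul_div_rpow_of_mul_deriv_le hx₀pos (fun t ht => hd t (hx₀pos.trans_le ht))
      (fun t ht => (hx₀ t ht).1) hx
  obtain ⟨l₀, hl₀, hl₀neg⟩ := hU0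
  have hneg : ∀ᶠ x in 𝓝[>] 0, U x < 0 := by
    filter_upwards [hl₀.eventually_lt_const hl₀neg] with x hx using EReal.coe_neg'.mp hx
  obtain ⟨δ, hUδ, hδx₀, hδ⟩ := (hneg.and ((eventually_lt_nhds hx₀pos).filter_mono
    nhdsWithin_le_nhds |>.and self_mem_nhdsWithin)).exists
  set K := U x₀ / δ ^ γ
  have hK : 0 < K := div_pos hUx₀ (Real.rpow_pos_of_pos hδ γ)
  have hbound : ∀ x > 0, U x ≤ K * x ^ γ := fun x hx => by
    rw [div_mul_comm, ← Real.div_rpow hx.le hδ.le, mul_comm]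
    exact hmono.monotoneOn.le_mul_div_rpow hγ0.le hδ hδx₀.le hUδ.le hUx₀.le hgrowth hx
  exact ⟨K * K ^ (γ / (1 - γ)), by positivity, γ / (1 - γ), div_pos hγ0 (by linarith),
    fun y hy => legendreConj_le_of_le_mul_rpow hK.le hγ0 hγ1 hbound hy⟩

/-- If `U` is a utility function with `lim_{x→∞} U(x) > 0`, `lim_{x→0+} U(x) < 0` and
asymptotic elasticity `AE(U) = limsup_{x→∞} x U'(x)/U(x) < 1`, then there exist `L > 0` and
`α > 0` such that the convex conjugate satisfies `V(y) ≤ L y^{-α}` for all `y > 0`. -/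
theorem stmt9 (U : ℝ → ℝ)
    (hmono : StrictMonoOn U (Set.Ioi 0))
    (hconc : StrictConcaveOn ℝ (Set.Ioi 0) U)
    (hsmooth : ContDiffOn ℝ 2 U (Set.Ioi 0))
    (hInada0 : Tendsto (deriv U) (nhdsWithin 0 (Set.Ioi 0)) atTop)
    (hInadaTop : Tendsto (deriv U) atTop (𝓝 0))
    (hUtop : ∃ l : EReal, Tendsto (fun x => (U x : EReal)) atTop (𝓝 l) ∧ 0 < l)
    (hU0 : ∃ l : EReal, Tendsto (fun x => (U x : EReal)) (nhdsWithin 0 (Set.Ioi 0)) (𝓝 l) ∧ l < 0)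
    (hAE : Filter.limsup (fun x => x * deriv U x / U x) atTop < 1) :
    ∃ L > (0 : ℝ), ∃ α > (0 : ℝ), ∀ y > (0 : ℝ), legendreConj U y ≤ L * y ^ (-α) :=
  stmt9_general U hmono hconc hsmooth hUtop hU0 hAE
end

section
/- Let U be a utility function and let I denote the inverse of U′. Then the convex conjugate V is differentiable on (0, ∞) with V′(y) = −I(y) for all y > 0, and lim_{y→∞} V′(y) = 0. -/
open MeasureTheory Filter Set Topology

/-- For a utility function `U` with `I = (U')⁻¹`, the convex conjugate `V` is differentiable
on `(0,∞)` with `V'(y) = −I(y)`, and `lim_{y→∞} V'(y) = 0`. -/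
theorem stmt10 (U : ℝ → ℝ)
    (hmono : StrictMonoOn U (Set.Ioi 0))
    (hconc : StrictConcaveOn ℝ (Set.Ioi 0) U)
    (hsmooth : ContDiffOn ℝ 2 U (Set.Ioi 0))
    (hInada0 : Tendsto (deriv U) (nhdsWithin 0 (Set.Ioi 0)) atTop)
    (hInadaTop : Tendsto (deriv U) atTop (𝓝 0))
    (I : ℝ → ℝ)
    (hIleft : ∀ x > (0 : ℝ), I (deriv U x) = x)
    (hIright : ∀ y > (0 : ℝ), 0 < I y ∧ deriv U (I y) = y) :
    (∀ y > (0 : ℝ), HasDerivAt (legendreConj U) (-(I y)) y) ∧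
      Tendsto (deriv (legendreConj U)) atTop (𝓝 0) := by
  -- differentiability of U on (0, ∞)
  have hdiff : ∀ x ∈ Set.Ioi (0:ℝ), DifferentiableAt ℝ U x := fun x hx =>
    ((hsmooth.differentiableOn (by norm_num)) x hx).differentiableAt
      (isOpen_Ioi.mem_nhds hx)
  -- deriv U is strictly antitone on (0, ∞)
  have hanti : StrictAntiOn (deriv U) (Set.Ioi 0) := hconc.strictAntiOn_deriv hdiff
  -- deriv U is positive on (0, ∞)
  have hfpos : ∀ x ∈ Set.Ioi (0:ℝ), 0 < deriv U x := by
    intro x hx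
    have h1 : deriv U (x + 1) < deriv U x := hanti hx (by simp at hx ⊢; linarith) (by linarith)
    have h2 : (0:ℝ) ≤ deriv U (x + 1) := by
      refine le_of_tendsto hInadaTop ?_
      filter_upwards [eventually_ge_atTop (x + 1)] with z hz
      rcases eq_or_lt_of_le hz with h | h
      · rw [h]
      · exact (hanti (by simp at hx ⊢; linarith) (by simp at hx ⊢; linarith) h).le
    linarith
  -- I is strictly antitone in the relevant sense
  have hIanti : ∀ u v : ℝ, 0 < u → u < v → I v < I u := by
    intro u v hu huv
    by_contra h
    push_neg at h
    rcases eq_or_lt_of_le h with h | h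
    · have h1 := (hIright u hu).2
      have h2 := (hIright v (hu.trans huv)).2
      rw [h] at h1
      linarith
    · have := hanti (Set.mem_Ioi.2 (hIright u hu).1)
        (Set.mem_Ioi.2 (hIright v (hu.trans huv)).1) h
      rw [(hIright u hu).2, (hIright v (hu.trans huv)).2] at this
      linarith
  -- the sup is attained at I y
  have hmax : ∀ y > (0:ℝ), ∀ x ∈ Set.Ioi (0:ℝ), U x - x * y ≤ U (I y) - I y * y := by
    intro y hy x hx
    obtain ⟨hIpos, hIeq⟩ := hIright y hy
    rcases lt_trichotomy x (I y) with h | h | h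
    · have hslope := hconc.deriv_lt_slope hx (Set.mem_Ioi.2 hIpos) h (hdiff _ (Set.mem_Ioi.2 hIpos))
      rw [hIeq, slope_def_field] at hslope
      have hd : (0:ℝ) < I y - x := by linarith
      have h2 : y * (I y - x) < U (I y) - U x := (lt_div_iff₀ hd).mp hslope
      nlinarith
    · rw [h]
    · have hslope := hconc.slope_lt_deriv (Set.mem_Ioi.2 hIpos) hx h (hdiff _ (Set.mem_Ioi.2 hIpos))
      rw [hIeq, slope_def_field] at hslope
      have hd : (0:ℝ) < x - I y := by linarith
      have h2 : U x - U (I y) < y * (x - I y) := (div_lt_iff₀ hd).mp hslope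
      nlinarith
  have hgreat : ∀ y > (0:ℝ),
      IsGreatest ((fun x => U x - x * y) '' Set.Ioi (0:ℝ)) (U (I y) - I y * y) := by
    intro y hy
    exact ⟨⟨I y, Set.mem_Ioi.2 (hIright y hy).1, rfl⟩, by
      rintro _ ⟨x, hx, rfl⟩; exact hmax y hy x hx⟩
  have hV : ∀ y > (0:ℝ), legendreConj U y = U (I y) - I y * y := fun y hy =>
    (hgreat y hy).csSup_eq
  have hlow : ∀ y > (0:ℝ), ∀ z > (0:ℝ), U (I y) - I y * z ≤ legendreConj U z := by
    intro y hy z hz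
    exact le_csSup ⟨_, fun w hw => (hgreat z hz).2 hw⟩
      ⟨I y, Set.mem_Ioi.2 (hIright y hy).1, rfl⟩
  -- continuity of I near positive points
  have hIcont : ∀ y > (0:ℝ), ∀ ε > (0:ℝ), ∀ᶠ z in 𝓝 y, 0 < z ∧ |I z - I y| ≤ ε := by
    intro y hy ε hε
    obtain ⟨hIpos, hIeq⟩ := hIright y hy
    set ε' : ℝ := min ε (I y / 2) with hε'def
    have hε' : 0 < ε' := lt_min hε (by linarith)
    have hε'le : ε' ≤ ε := min_le_left _ _
    have hx2pos : 0 < I y - ε' := by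
      have : ε' ≤ I y / 2 := min_le_right _ _
      linarith
    have hx1pos : 0 < I y + ε' := by linarith
    have hf1 : deriv U (I y + ε') < y := by
      have := hanti (Set.mem_Ioi.2 hIpos) (Set.mem_Ioi.2 hx1pos) (by linarith)
      rwa [hIeq] at this
    have hf2 : y < deriv U (I y - ε') := by
      have := hanti (Set.mem_Ioi.2 hx2pos) (Set.mem_Ioi.2 hIpos) (by linarith)
      rwa [hIeq] at this
    have hopen : Set.Ioo (deriv U (I y + ε')) (deriv U (I y - ε')) ∈ 𝓝 y :=
      isOpen_Ioo.mem_nhds ⟨hf1, hf2⟩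
    filter_upwards [hopen] with z hz
    have hzpos : 0 < z := (hfpos _ (Set.mem_Ioi.2 hx1pos)).trans hz.1
    obtain ⟨hIzpos, hIzeq⟩ := hIright z hzpos
    have hup : I z < I y + ε' := by
      by_contra h
      push_neg at h
      rcases eq_or_lt_of_le h with h | h
      · rw [h, hIzeq] at hz; exact absurd hz.1 (lt_irrefl _)
      · have := hanti (Set.mem_Ioi.2 hx1pos) (Set.mem_Ioi.2 hIzpos) h
        rw [hIzeq] at this
        linarith [hz.1]
    have hdn : I y - ε' < I z := by
      by_contra h
      push_neg at h
      rcases eq_or_lt_of_le h with h | h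
      · rw [← h, hIzeq] at hz; exact absurd hz.2 (lt_irrefl _)
      · have := hanti (Set.mem_Ioi.2 hIzpos) (Set.mem_Ioi.2 hx2pos) h
        rw [hIzeq] at this
        linarith [hz.2]
    exact ⟨hzpos, by rw [abs_le]; constructor <;> linarith⟩
  -- the derivative
  have hderiv : ∀ y > (0:ℝ), HasDerivAt (legendreConj U) (-(I y)) y := by
    intro y hy
    rw [hasDerivAt_iff_isLittleO]
    rw [Asymptotics.isLittleO_iff]
    intro c hc
    filter_upwards [hIcont y hy c hc] with z hzh
    obtain ⟨hz, hIzc⟩ := hzh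
    obtain ⟨hIzpos, hIzeq⟩ := hIright z hz
    have hVz : legendreConj U z = U (I z) - I z * z := hV z hz
    have hVy : legendreConj U y = U (I y) - I y * y := hV y hy
    have h1 : U (I y) - I y * z ≤ legendreConj U z := hlow y hy z hz
    have h2 : U (I z) - I z * y ≤ legendreConj U y := hlow z hz y hy
    have hrem0 : 0 ≤ legendreConj U z - legendreConj U y - (z - y) * (-(I y)) := by
      rw [hVy]; nlinarith
    have hrem1 : legendreConj U z - legendreConj U y - (z - y) * (-(I y))
        ≤ (I y - I z) * (z - y) := by
      rw [hVz]; nlinarith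
    have habs : |legendreConj U z - legendreConj U y - (z - y) * (-(I y))|
        ≤ |I z - I y| * |z - y| := by
      rw [abs_of_nonneg hrem0]
      calc legendreConj U z - legendreConj U y - (z - y) * (-(I y))
          ≤ (I y - I z) * (z - y) := hrem1
        _ ≤ |I y - I z| * |z - y| := by
            calc (I y - I z) * (z - y) ≤ |(I y - I z) * (z - y)| := le_abs_self _
              _ = |I y - I z| * |z - y| := abs_mul _ _
        _ = |I z - I y| * |z - y| := by rw [abs_sub_comm]
    calc ‖legendreConj U z - legendreConj U y - (z - y) • (-(I y))‖
        = |legendreConj U z - legendreConj U y - (z - y) * (-(I y))| := by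
          simp [smul_eq_mul]
      _ ≤ |I z - I y| * |z - y| := habs
      _ ≤ c * |z - y| := by
          apply mul_le_mul_of_nonneg_right hIzc (abs_nonneg _)
      _ = c * ‖z - y‖ := by simp
  refine ⟨hderiv, ?_⟩
  -- I y → 0 as y → ∞
  have hI0 : Tendsto (fun y => -(I y)) atTop (𝓝 0) := by
    rw [NormedAddCommGroup.tendsto_nhds_zero]
    intro ε hε
    have hfε : 0 < deriv U (ε / 2) := hfpos _ (Set.mem_Ioi.2 (by linarith))
    filter_upwards [eventually_gt_atTop (max (deriv U (ε / 2)) 0)] with y hy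
    have hy0 : 0 < y := (le_max_right _ _).trans_lt hy
    have hyf : deriv U (ε / 2) < y := (le_max_left _ _).trans_lt hy
    obtain ⟨hIpos, hIeq⟩ := hIright y hy0
    have hIlt : I y < ε / 2 := by
      by_contra h
      push_neg at h
      rcases eq_or_lt_of_le h with h | h
      · rw [h, hIeq] at hyf; exact absurd hyf (lt_irrefl _)
      · have := hanti (Set.mem_Ioi.2 (by linarith : (0:ℝ) < ε / 2))
          (Set.mem_Ioi.2 hIpos) h
        rw [hIeq] at this
        linarith
    rw [Real.norm_eq_abs, abs_neg, abs_of_pos hIpos]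
    linarith
  refine hI0.congr' ?_
  filter_upwards [eventually_gt_atTop (0:ℝ)] with y hy
  exact ((hderiv y hy).deriv).symm
end

section
/- Let V : (0, ∞) → ℝ be a convex, nonincreasing, differentiable function with lim_{y→∞} V′(y) = 0. Then for every ε > 0 there exists M > 0 such that every y > 0 with V(y) ≤ −M satisfies |V(y)| ≤ ε y. -/
open MeasureTheory Filter Set Topology

/-- Tail estimate for a convex, nonincreasing, differentiable `V : (0,∞) → ℝ` with
`V'(y) → 0` as `y → ∞`: for every `ε > 0` there is `M > 0` such that any `y > 0` with
`V(y) ≤ −M` satisfies `|V(y)| ≤ ε y`. -/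
theorem stmt11 (V : ℝ → ℝ)
    (hconv : ConvexOn ℝ (Set.Ioi 0) V)
    (hanti : AntitoneOn V (Set.Ioi 0))
    (hdiff : ∀ y ∈ Set.Ioi (0 : ℝ), DifferentiableAt ℝ V y)
    (hlim : Tendsto (deriv V) atTop (𝓝 0)) :
    ∀ ε > (0 : ℝ), ∃ M > (0 : ℝ), ∀ y > (0 : ℝ), V y ≤ -M → |V y| ≤ ε * y := by
  intro ε hε
  have hhalf : (0 : ℝ) < ε / 2 := by positivity
  obtain ⟨a, ha⟩ := (Metric.tendsto_atTop.mp hlim (ε / 2) hhalf)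
  set y0 : ℝ := max a 1 with hy0def
  have hy0pos : (0 : ℝ) < y0 := lt_of_lt_of_le one_pos (le_max_right a 1)
  have hderiv_small : ∀ z : ℝ, y0 ≤ z → |deriv V z| ≤ ε / 2 := by
    intro z hz
    have := ha z (le_trans (le_max_left a 1) hz)
    simpa [Real.dist_eq] using this.le
  set C : ℝ := |V y0| + 1 with hCdef
  have hCpos : (0 : ℝ) < C := by positivity
  refine ⟨2 * C, by positivity, ?_⟩
  intro y hy hVy
  -- y must be > y0
  have hylt : y0 < y := by
    by_contra h
    push_neg at h
    have h1 : V y0 ≤ V y := hanti hy (mem_Ioi.mpr hy0pos) h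
    have h2 : -C ≤ V y0 := by
      have := neg_abs_le (V y0)
      linarith [abs_nonneg (V y0)]
    linarith
  -- MVT on [y0, y]
  have hsub : Set.Icc y0 y ⊆ Set.Ioi (0 : ℝ) := fun x hx =>
    lt_of_lt_of_le hy0pos hx.1
  have hcont : ContinuousOn V (Set.Icc y0 y) := fun x hx =>
    (hdiff x (hsub hx)).continuousAt.continuousWithinAt
  have hdiff' : DifferentiableOn ℝ V (Set.Ioo y0 y) := fun x hx =>
    (hdiff x (hsub ⟨hx.1.le, hx.2.le⟩)).differentiableWithinAt
  obtain ⟨c, hc, hceq⟩ := exists_deriv_eq_slope V hylt hcont hdiff'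
  have hcsmall : |deriv V c| ≤ ε / 2 := hderiv_small c hc.1.le
  have hVyeq : V y - V y0 = deriv V c * (y - y0) := by
    have hne : y - y0 ≠ 0 := by linarith
    field_simp at hceq
    linarith [hceq]
  have hbound : |V y - V y0| ≤ ε / 2 * (y - y0) := by
    rw [hVyeq, abs_mul, abs_of_nonneg (by linarith : (0:ℝ) ≤ y - y0)]
    exact mul_le_mul_of_nonneg_right hcsmall (by linarith)
  have h1 : -(C + ε / 2 * y) ≤ V y := by
    have h2 : -(ε / 2 * (y - y0)) ≤ V y - V y0 := (abs_le.mp hbound).1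
    have h3 : -C ≤ V y0 := by linarith [neg_abs_le (V y0), abs_nonneg (V y0)]
    nlinarith
  have hCy : C ≤ ε / 2 * y := by nlinarith
  have hVyneg : V y ≤ 0 := by nlinarith
  rw [abs_of_nonpos hVyneg]
  linarith
end

section
/- Let U be a utility function, and let lim_{y→0+} V(y) and lim_{y→∞} V(y) be taken in the extended reals. Then lim_{y→0+} V(y) = lim_{x→∞} U(x) and lim_{y→∞} V(y) = lim_{x→0+} U(x). -/
open MeasureTheory Filter Set Topology

private lemma tendsto_ereal_of_bounds {α : Type*} {l : Filter α} {f : α → ℝ} {a : EReal}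
    (h1 : ∀ c : ℝ, (c : EReal) < a → ∀ᶠ z in l, c ≤ f z)
    (h2 : ∀ c : ℝ, a < (c : EReal) → ∀ᶠ z in l, f z ≤ c) :
    Tendsto (fun z => (f z : EReal)) l (𝓝 a) := by
  induction a with
  | bot =>
    rw [EReal.tendsto_nhds_bot_iff_real]
    intro c
    filter_upwards [h2 (c - 1) (by exact_mod_cast EReal.bot_lt_coe _)] with z hz
    exact_mod_cast lt_of_le_of_lt hz (by linarith)
  | coe r =>
    rw [EReal.tendsto_coe]
    rw [Metric.tendsto_nhds]
    intro ε hε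
    have e1 := h1 (r - ε / 2) (by exact_mod_cast by linarith)
    have e2 := h2 (r + ε / 2) (by exact_mod_cast by linarith)
    filter_upwards [e1, e2] with z hz1 hz2
    rw [Real.dist_eq, abs_lt]
    constructor <;> linarith
  | top =>
    rw [EReal.tendsto_nhds_top_iff_real]
    intro c
    filter_upwards [h1 (c + 1) (by exact_mod_cast EReal.coe_lt_top _)] with z hz
    exact_mod_cast lt_of_lt_of_le (by linarith : c < c + 1) hz

/-- For a utility function `U` with convex conjugate `V`:
`lim_{y→0+} V(y) = lim_{x→∞} U(x)` and `lim_{y→∞} V(y) = lim_{x→0+} U(x)`,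
both limits taken in the extended reals. -/
theorem stmt12 (U : ℝ → ℝ)
    (hmono : StrictMonoOn U (Set.Ioi 0))
    (hconc : StrictConcaveOn ℝ (Set.Ioi 0) U)
    (hsmooth : ContDiffOn ℝ 2 U (Set.Ioi 0))
    (hInada0 : Tendsto (deriv U) (nhdsWithin 0 (Set.Ioi 0)) atTop)
    (hInadaTop : Tendsto (deriv U) atTop (𝓝 0)) :
    ∃ Ltop L0 : EReal,
      Tendsto (fun x => (U x : EReal)) atTop (𝓝 Ltop) ∧
      Tendsto (fun y => (legendreConj U y : EReal)) (nhdsWithin 0 (Set.Ioi 0)) (𝓝 Ltop) ∧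
      Tendsto (fun x => (U x : EReal)) (nhdsWithin 0 (Set.Ioi 0)) (𝓝 L0) ∧
      Tendsto (fun y => (legendreConj U y : EReal)) atTop (𝓝 L0) := by
  -- differentiability
  have hdiff : ∀ x ∈ Set.Ioi (0:ℝ), DifferentiableAt ℝ U x := by
    intro x hx
    have := (hsmooth.differentiableOn (by norm_num)).differentiableAt
      (isOpen_Ioi.mem_nhds hx)
    exact this
  -- tangent line bound: for 0 < x0 < x, U x ≤ U x0 + deriv U x0 * (x - x0)
  have tangent : ∀ x0 ∈ Set.Ioi (0:ℝ), ∀ x ∈ Set.Ioi (0:ℝ), x0 < x →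
      U x ≤ U x0 + deriv U x0 * (x - x0) := by
    intro x0 hx0 x hx hlt
    have h := hconc.concaveOn.slope_le_deriv hx0 hx hlt (hdiff x0 hx0)
    rw [slope_def_field, div_le_iff₀ (by linarith)] at h
    · linarith [h]
  -- key bound: if deriv U x0 ≤ y, 0 ≤ y, then ∀ x > 0, U x - x*y ≤ U x0
  have keybound : ∀ x0 ∈ Set.Ioi (0:ℝ), ∀ y : ℝ, deriv U x0 ≤ y → 0 ≤ y →
      ∀ x ∈ Set.Ioi (0:ℝ), U x - x * y ≤ U x0 := by
    intro x0 hx0 y hdy hy0 x hx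
    rcases le_or_gt x x0 with h | h
    · have : U x ≤ U x0 := hmono.monotoneOn hx hx0 h
      nlinarith [mul_nonneg (le_of_lt (mem_Ioi.mp hx)) hy0]
    · have ht := tangent x0 hx0 x hx h
      nlinarith [mul_le_mul_of_nonneg_right hdy (by linarith : (0:ℝ) ≤ x - x0),
        mul_nonneg (le_of_lt (mem_Ioi.mp hx0)) hy0]
  -- nonempty image
  have hne : ∀ y : ℝ, ((fun x => U x - x * y) '' Set.Ioi (0:ℝ)).Nonempty :=
    fun y => ⟨U 1 - 1 * y, ⟨1, by norm_num, rfl⟩⟩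
  -- bddAbove for y > 0
  have hbdd : ∀ y : ℝ, 0 < y → BddAbove ((fun x => U x - x * y) '' Set.Ioi (0:ℝ)) := by
    intro y hy
    have : ∀ᶠ x in atTop, deriv U x < y :=
      (hInadaTop.eventually (eventually_lt_nhds hy))
    obtain ⟨a, ha⟩ := (this.and (eventually_gt_atTop 0)).exists
    refine ⟨U a, ?_⟩
    rintro _ ⟨x, hx, rfl⟩
    exact keybound a ha.2 y ha.1.le hy.le x hx
  -- elementwise lower bound for V
  have hVlb : ∀ y : ℝ, 0 < y → ∀ x ∈ Set.Ioi (0:ℝ), U x - x * y ≤ legendreConj U y := by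
    intro y hy x hx
    exact le_csSup (hbdd y hy) ⟨x, hx, rfl⟩
  set Ltop : EReal := sSup ((fun x => (U x : EReal)) '' Set.Ioi (0:ℝ)) with hLtop
  set L0 : EReal := sInf ((fun x => (U x : EReal)) '' Set.Ioi (0:ℝ)) with hL0
  have hUleLtop : ∀ x ∈ Set.Ioi (0:ℝ), (U x : EReal) ≤ Ltop :=
    fun x hx => le_sSup ⟨x, hx, rfl⟩
  have hL0leU : ∀ x ∈ Set.Ioi (0:ℝ), L0 ≤ (U x : EReal) :=
    fun x hx => sInf_le ⟨x, hx, rfl⟩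
  refine ⟨Ltop, L0, ?_, ?_, ?_, ?_⟩
  · -- U → Ltop at ⊤
    apply tendsto_ereal_of_bounds
    · intro c hc
      obtain ⟨_, ⟨x0, hx0, rfl⟩, hcx0⟩ := lt_sSup_iff.mp hc
      rw [EReal.coe_lt_coe_iff] at hcx0
      filter_upwards [eventually_ge_atTop x0, eventually_gt_atTop 0] with x h1 h2
      rcases eq_or_lt_of_le h1 with rfl | h1
      · exact hcx0.le
      · exact hcx0.le.trans (hmono.monotoneOn hx0 h2 h1.le)
    · intro c hc
      filter_upwards [eventually_gt_atTop 0] with x hx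
      have := (hUleLtop x hx).trans_lt hc
      exact_mod_cast this.le
  · -- V → Ltop at 0+
    apply tendsto_ereal_of_bounds
    · intro c hc
      obtain ⟨_, ⟨x0, hx0, rfl⟩, hcx0⟩ := lt_sSup_iff.mp hc
      rw [EReal.coe_lt_coe_iff] at hcx0
      have hx0pos : (0:ℝ) < x0 := hx0
      have hpos : (0:ℝ) < (U x0 - c) / x0 := div_pos (by linarith) hx0pos
      filter_upwards [Ioo_mem_nhdsGT_of_mem (by constructor <;> [rfl; exact hpos] :
          (0:ℝ) ∈ Set.Ico 0 ((U x0 - c)/x0))] with y hy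
      have h1 := hVlb y hy.1 x0 hx0
      have h2 : x0 * y < U x0 - c := by
        rw [mul_comm]
        exact (lt_div_iff₀ hx0pos).mp hy.2
      linarith
    · intro c hc
      filter_upwards [self_mem_nhdsWithin] with y hy
      refine csSup_le (hne y) ?_
      rintro _ ⟨x, hx, rfl⟩
      have hUx : (U x : EReal) < (c : EReal) := (hUleLtop x hx).trans_lt hc
      rw [EReal.coe_lt_coe_iff] at hUx
      show U x - x * y ≤ c
      nlinarith [mul_pos (mem_Ioi.mp hx) (mem_Ioi.mp hy)]
  · -- U → L0 at 0+
    apply tendsto_ereal_of_bounds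
    · intro c hc
      filter_upwards [self_mem_nhdsWithin] with x hx
      have := hc.trans_le (hL0leU x hx)
      exact_mod_cast this.le
    · intro c hc
      obtain ⟨_, ⟨x0, hx0, rfl⟩, hx0c⟩ := sInf_lt_iff.mp hc
      rw [EReal.coe_lt_coe_iff] at hx0c
      filter_upwards [Ioo_mem_nhdsGT_of_mem (by constructor <;> [rfl; exact hx0] :
          (0:ℝ) ∈ Set.Ico 0 x0)] with x hx
      exact (hmono.monotoneOn hx.1 hx0 hx.2.le).trans hx0c.le
  · -- V → L0 at ⊤
    apply tendsto_ereal_of_bounds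
    · intro c hc
      obtain ⟨c', hcc', hc'L0⟩ := exists_between hc
      lift c' to ℝ using ⟨hc'L0.trans_le le_top |>.ne, (EReal.coe_lt_coe_iff.mpr (by norm_num : (0:ℝ) < 1) |> fun _ => (lt_of_le_of_lt (EReal.bot_lt_coe c).le hcc').ne')⟩
      rw [EReal.coe_lt_coe_iff] at hcc'
      have hc'U : ∀ x ∈ Set.Ioi (0:ℝ), c' ≤ U x := by
        intro x hx
        have := hc'L0.trans_le (hL0leU x hx)
        exact_mod_cast this.le
      filter_upwards [eventually_gt_atTop 0] with y hy
      have hxpos : (0:ℝ) < (c' - c) / y := div_pos (by linarith) hy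
      have h1 := hVlb y hy ((c' - c)/y) hxpos
      have h2 : (c' - c) / y * y = c' - c := div_mul_cancel₀ _ hy.ne'
      have h3 := hc'U _ hxpos
      rw [h2] at h1
      linarith
    · intro c hc
      obtain ⟨_, ⟨x0, hx0, rfl⟩, hx0c⟩ := sInf_lt_iff.mp hc
      rw [EReal.coe_lt_coe_iff] at hx0c
      filter_upwards [eventually_ge_atTop (max (deriv U x0) 1)] with y hy
      have hy1 : (1:ℝ) ≤ y := le_trans (le_max_right _ _) hy
      refine csSup_le (hne y) ?_
      rintro _ ⟨x, hx, rfl⟩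
      exact (keybound x0 hx0 y (le_trans (le_max_left _ _) hy) (by linarith) x hx).trans
        hx0c.le
end

section
/- Let (Ω, F, P) be a probability space, let Z ≥ 0 be a random variable with E[Z] = 1 (a pricing density), let U : (0, ∞) → ℝ be nondecreasing and continuous, and let M > 0 almost surely satisfy E[Z M] ≤ x for some x > 0, E[(U(M))^+] < ∞, and E[U(M)] = z ∈ ℝ. Then for every ε > 0 there exist constants 0 < c ≤ C < ∞ and a random variable M′ with c ≤ M′ ≤ C almost surely, E[Z M′] ≤ x, and E[U(M′)] ≥ z − ε. -/
open MeasureTheory Filter Set Topology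

/-!
With `α ∈ [0, 1)` and `β ≥ x`, the claim `M' = (α M + (1 - α) x) ∧ β` lies in `[(1 - α) x, β]`
and costs at most `α E[ZM] + (1 - α) x E[Z] ≤ x`. Since `M'` lies between `M` and `x`, monotonicity
of `U` gives `|U(M')| ≤ max |U(M)| |U(x)|`, and `M' → M` as `α → 1`, `β → ∞`; by dominated
convergence `E[U(M')] → E[U(M)] = z`.
-/

theorem ContinuousOn.comp_aemeasurable_of_ae_mem {Ω β γ : Type*} [MeasurableSpace Ω]
    {μ : Measure Ω} [TopologicalSpace β] [MeasurableSpace β] [OpensMeasurableSpace β]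
    [TopologicalSpace γ] [MeasurableSpace γ] [BorelSpace γ] {g : β → γ} {f : Ω → β} {s : Set β}
    (hg : ContinuousOn g s) (hs : MeasurableSet s) (hf : AEMeasurable f μ)
    (hfs : ∀ᵐ ω ∂μ, f ω ∈ s) : AEMeasurable (fun ω => g (f ω)) μ := by
  have hmap : (μ.map f).restrict s = μ.map f :=
    Measure.restrict_eq_self_of_ae_mem ((ae_map_iff hf hs).2 hfs)
  exact (hmap ▸ hg.aemeasurable hs).comp_aemeasurable hf

theorem MonotoneOn.abs_le_max_abs_of_mem_uIcc {α : Type*} [LinearOrder α] {f : α → ℝ}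
    {s : Set α} (hf : MonotoneOn f s) {a b t : α} (ha : a ∈ s) (hb : b ∈ s) (ht : t ∈ s)
    (hab : t ∈ uIcc a b) : |f t| ≤ max |f a| |f b| := by
  rcases le_total a b with h | h
  · rw [uIcc_of_le h] at hab
    exact abs_le_max_abs_abs (hf ha ht hab.1) (hf ht hb hab.2)
  · rw [uIcc_of_ge h] at hab
    exact max_comm |f b| |f a| ▸ abs_le_max_abs_abs (hf hb ht hab.1) (hf ht ha hab.2)

theorem convex_combo_mem_uIcc {α m x : ℝ} (h0 : 0 ≤ α) (h1 : α ≤ 1) :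
    α * m + (1 - α) * x ∈ uIcc m x :=
  segment_eq_uIcc m x ▸ ⟨α, 1 - α, h0, sub_nonneg.2 h1, by ring, rfl⟩

def mixCap (α β x m : ℝ) : ℝ := min (α * m + (1 - α) * x) β

section MixCap

variable {α β x : ℝ}

theorem continuous_mixCap : Continuous (mixCap α β x) := by
  unfold mixCap
  fun_prop

theorem mixCap_mem_uIcc (h0 : 0 ≤ α) (h1 : α ≤ 1) (hxβ : x ≤ β) (m : ℝ) :
    mixCap α β x m ∈ uIcc m x := by
  obtain ⟨hlo, hhi⟩ := convex_combo_mem_uIcc (m := m) (x := x) h0 h1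
  exact ⟨le_min hlo ((min_le_right m x).trans hxβ), (min_le_left _ _).trans hhi⟩

theorem mixCap_mem_Icc (h0 : 0 ≤ α) (hx : 0 ≤ x) (hxβ : x ≤ β) {m : ℝ} (hm : 0 ≤ m) :
    mixCap α β x m ∈ Icc ((1 - α) * x) β := by
  have hcβ : (1 - α) * x ≤ β := by nlinarith
  exact ⟨le_min (le_add_of_nonneg_left (mul_nonneg h0 hm)) hcβ, min_le_right _ _⟩

end MixCap

theorem tendsto_mixCap {ι : Type*} {l : Filter ι} {α β : ι → ℝ} (hα : Tendsto α l (𝓝 1))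
    (hβ : Tendsto β l atTop) (x m : ℝ) :
    Tendsto (fun i => mixCap (α i) (β i) x m) l (𝓝 m) := by
  have hcombo : Tendsto (fun i => α i * m + (1 - α i) * x) l (𝓝 m) := by
    simpa using (hα.mul_const m).add (((tendsto_const_nhds (x := (1 : ℝ))).sub hα).mul_const x)
  refine hcombo.congr' ?_
  filter_upwards [hcombo.eventually (eventually_le_nhds (lt_add_one m)),
    hβ.eventually_ge_atTop (m + 1)] with i hle hge
  exact (min_eq_left (hle.trans hge)).symm

section Claims

variable {Ω : Type*} {mΩ : MeasurableSpace Ω} {P : Measure Ω}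

theorem integral_mul_mixCap_le {Z M : Ω → ℝ} (hZpos : ∀ᵐ ω ∂P, 0 ≤ Z ω)
    (hZint : Integrable Z P) (hZmean : ∫ ω, Z ω ∂P = 1) (hM : ∀ᵐ ω ∂P, 0 ≤ M ω)
    (hZM : Integrable (fun ω => Z ω * M ω) P) {x : ℝ} (hx : 0 ≤ x)
    (hbudget : ∫ ω, Z ω * M ω ∂P ≤ x) {α β : ℝ} (h0 : 0 ≤ α) (h1 : α ≤ 1) (hxβ : x ≤ β) :
    ∫ ω, Z ω * mixCap α β x (M ω) ∂P ≤ x := by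
  have hc : 0 ≤ (1 - α) * x := mul_nonneg (sub_nonneg.2 h1) hx
  calc ∫ ω, Z ω * mixCap α β x (M ω) ∂P
      ≤ ∫ ω, α * (Z ω * M ω) + (1 - α) * x * Z ω ∂P := by
        refine integral_mono_of_nonneg ?_ ((hZM.const_mul α).add (hZint.const_mul _)) ?_
        · filter_upwards [hZpos, hM] with ω hZ hMω
          exact mul_nonneg hZ (hc.trans (mixCap_mem_Icc h0 hx hxβ hMω).1)
        · filter_upwards [hZpos] with ω hZ
          exact (mul_le_mul_of_nonneg_left (min_le_left _ _) hZ).trans_eq (by ring)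
    _ = α * ∫ ω, Z ω * M ω ∂P + (1 - α) * x * ∫ ω, Z ω ∂P := by
        rw [integral_add (hZM.const_mul α) (hZint.const_mul _), integral_const_mul,
          integral_const_mul]
    _ ≤ x := by rw [hZmean]; nlinarith

theorem tendsto_integral_comp_mixCap [IsFiniteMeasure P] {U : ℝ → ℝ}
    (hmono : MonotoneOn U (Ioi 0)) (hcont : ContinuousOn U (Ioi 0)) {M : Ω → ℝ}
    (hM : AEMeasurable M P) (hMpos : ∀ᵐ ω ∂P, 0 < M ω) (hUM : Integrable (fun ω => U (M ω)) P)
    {x : ℝ} (hx : 0 < x) {ι : Type*} {l : Filter ι} [l.IsCountablyGenerated] {α β : ι → ℝ}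
    (hα : Tendsto α l (𝓝 1)) (hβ : Tendsto β l atTop) (hα01 : ∀ᶠ i in l, α i ∈ Icc 0 1) :
    Tendsto (fun i => ∫ ω, U (mixCap (α i) (β i) x (M ω)) ∂P) l (𝓝 (∫ ω, U (M ω) ∂P)) := by
  have hmem : ∀ᶠ i in l, ∀ m, mixCap (α i) (β i) x m ∈ uIcc m x := by
    filter_upwards [hα01, hβ.eventually_ge_atTop x] with i hi hxβ
    exact mixCap_mem_uIcc hi.1 hi.2 hxβ
  have hpos : ∀ {m t : ℝ}, 0 < m → t ∈ uIcc m x → t ∈ Ioi 0 := fun hm ht =>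
    (lt_min hm hx).trans_le ht.1
  refine tendsto_integral_filter_of_dominated_convergence (fun ω => max |U (M ω)| |U x|)
    ?_ ?_ (hUM.abs.sup (integrable_const _)) ?_
  · filter_upwards [hmem] with i hi
    refine (hcont.comp_aemeasurable_of_ae_mem measurableSet_Ioi
      (continuous_mixCap.measurable.comp_aemeasurable hM) ?_).aestronglyMeasurable
    filter_upwards [hMpos] with ω hω
    exact hpos hω (hi _)
  · filter_upwards [hmem] with i hi
    filter_upwards [hMpos] with ω hω
    exact hmono.abs_le_max_abs_of_mem_uIcc hω hx (hpos hω (hi _)) (hi _)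
  · filter_upwards [hMpos] with ω hω
    exact (hcont.continuousAt (Ioi_mem_nhds hω)).tendsto.comp (tendsto_mixCap hα hβ x (M ω))

end Claims

theorem stmt14_general {Ω : Type*} {mΩ : MeasurableSpace Ω} (P : Measure Ω) [IsProbabilityMeasure P]
    (Z : Ω → ℝ) (hZpos : ∀ᵐ ω ∂P, 0 ≤ Z ω)
    (hZint : Integrable Z P) (hZmean : ∫ ω, Z ω ∂P = 1)
    (U : ℝ → ℝ) (hmono : MonotoneOn U (Set.Ioi 0)) (hcont : ContinuousOn U (Set.Ioi 0))
    (M : Ω → ℝ) (hMmeas : AEMeasurable M P) (hMpos : ∀ᵐ ω ∂P, 0 < M ω)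
    (x : ℝ) (hx : 0 < x)
    (hbudget : Integrable (fun ω => Z ω * M ω) P) (hbudget' : ∫ ω, Z ω * M ω ∂P ≤ x)
    (z : ℝ) (hUint : Integrable (fun ω => U (M ω)) P) (hz : ∫ ω, U (M ω) ∂P = z) :
    ∀ ε > (0 : ℝ), ∃ c C : ℝ, 0 < c ∧ c ≤ C ∧
      ∃ M' : Ω → ℝ, AEMeasurable M' P ∧ (∀ᵐ ω ∂P, M' ω ∈ Set.Icc c C) ∧
        (∫ ω, Z ω * M' ω ∂P) ≤ x ∧ (∫ ω, U (M' ω) ∂P) ≥ z - ε := by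
  intro ε hε
  have hα : Tendsto Prod.fst (𝓝[<] (1 : ℝ) ×ˢ (atTop : Filter ℝ)) (𝓝 1) :=
    tendsto_fst.mono_right nhdsWithin_le_nhds
  have hα01 : ∀ᶠ p in 𝓝[<] (1 : ℝ) ×ˢ (atTop : Filter ℝ), p.1 ∈ Ioo 0 1 :=
    tendsto_fst.eventually (Ioo_mem_nhdsLT zero_lt_one)
  have hβ : Tendsto Prod.snd (𝓝[<] (1 : ℝ) ×ˢ (atTop : Filter ℝ)) atTop := tendsto_snd
  have hU := tendsto_integral_comp_mixCap hmono hcont hMmeas hMpos hUint hx hα hβ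
    (hα01.mono fun _ h => Ioo_subset_Icc_self h)
  rw [hz] at hU
  obtain ⟨⟨α, β⟩, ⟨⟨hα0, hα1⟩, hxβ⟩, hUε⟩ := ((hα01.and (hβ.eventually_ge_atTop x)).and
    (hU.eventually (eventually_ge_nhds (sub_lt_self z hε)))).exists
  refine ⟨(1 - α) * x, β, mul_pos (sub_pos.2 hα1) hx, ?_, fun ω => mixCap α β x (M ω),
    continuous_mixCap.measurable.comp_aemeasurable hMmeas, ?_,
    integral_mul_mixCap_le hZpos hZint hZmean (hMpos.mono fun _ h => h.le) hbudget hx.le hbudget'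
      hα0.le hα1.le hxβ, hUε⟩
  · nlinarith
  · filter_upwards [hMpos] with ω hω
    exact mixCap_mem_Icc hα0.le hx.le hxβ hω.le

/-- Approximation of a budget-feasible claim by a claim bounded above and bounded away from
zero, with almost the same expected utility: if `E[ZM] ≤ x`, `E[U(M)] = z`, then for every
`ε > 0` there are `0 < c ≤ C < ∞` and a claim `M'` with `c ≤ M' ≤ C` a.s., `E[ZM'] ≤ x`
and `E[U(M')] ≥ z − ε`. -/
theorem stmt14 {Ω : Type*} {mΩ : MeasurableSpace Ω} (P : Measure Ω) [IsProbabilityMeasure P]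
    (Z : Ω → ℝ) (hZmeas : AEMeasurable Z P) (hZpos : ∀ᵐ ω ∂P, 0 ≤ Z ω)
    (hZint : Integrable Z P) (hZmean : ∫ ω, Z ω ∂P = 1)
    (U : ℝ → ℝ) (hmono : MonotoneOn U (Set.Ioi 0)) (hcont : ContinuousOn U (Set.Ioi 0))
    (M : Ω → ℝ) (hMmeas : AEMeasurable M P) (hMpos : ∀ᵐ ω ∂P, 0 < M ω)
    (x : ℝ) (hx : 0 < x)
    (hbudget : Integrable (fun ω => Z ω * M ω) P) (hbudget' : ∫ ω, Z ω * M ω ∂P ≤ x)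
    (hUposint : Integrable (fun ω => max (U (M ω)) 0) P)
    (z : ℝ) (hUint : Integrable (fun ω => U (M ω)) P) (hz : ∫ ω, U (M ω) ∂P = z) :
    ∀ ε > (0 : ℝ), ∃ c C : ℝ, 0 < c ∧ c ≤ C ∧
      ∃ M' : Ω → ℝ, AEMeasurable M' P ∧ (∀ᵐ ω ∂P, M' ω ∈ Set.Icc c C) ∧
        (∫ ω, Z ω * M' ω ∂P) ≤ x ∧ (∫ ω, U (M' ω) ∂P) ≥ z - ε :=
  stmt14_general (mΩ := mΩ) P Z hZpos hZint hZmean U hmono hcont M hMmeas hMpos x hx hbudget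
    hbudget' z hUint hz
end

section
/- Let (μ_n)_{n≥1} be a tight sequence of Borel probability measures on C([0,1], ℝ) equipped with the supremum metric, and let M : C([0,1], ℝ) → ℝ be bounded and continuous. For k ≥ 1 and ω ∈ C([0,1], ℝ), let ω^k be the piecewise-linear interpolation of ω at the nodes j/k, j = 0, 1, ..., k, i.e., ω^k(s) = ω(j/k) + k (s − j/k)(ω((j+1)/k) − ω(j/k)) for j/k ≤ s ≤ (j+1)/k. Then for every δ > 0 there exist K and N such that for all k ≥ K and all n ≥ N, μ_n{ ω : |M(ω^k) − M(ω)| > δ } < δ. -/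
open MeasureTheory Filter Set Topology Uniformity

lemma my_equi {X : Type*} [TopologicalSpace X] [CompactSpace X]
    {K : Set C(X, ℝ)} (hK : IsCompact K) :
    Equicontinuous (fun f : K => (f : X → ℝ)) := by
  intro x₀
  rw [Metric.equicontinuousAt_iff_right]
  intro ε hε
  obtain ⟨t, htf, hcover⟩ := Metric.totallyBounded_iff.mp hK.totallyBounded (ε/3) (by linarith)
  have hev : ∀ᶠ x in 𝓝 x₀, ∀ y ∈ t, dist ((y : C(X,ℝ)) x) (y x₀) < ε/3 := by
    refine htf.eventually_all.mpr fun y _ => ?_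
    exact Metric.tendsto_nhds.mp (y.continuous.continuousAt) (ε/3) (by linarith)
  filter_upwards [hev] with x hx f
  obtain ⟨y, hy, hfy⟩ := Set.mem_iUnion₂.mp (hcover f.2)
  have hfy' : dist (f : C(X,ℝ)) y < ε/3 := Metric.mem_ball.mp hfy
  have h1 : dist ((f : C(X,ℝ)) x₀) (y x₀) ≤ dist (f : C(X,ℝ)) y :=
    ContinuousMap.dist_apply_le_dist x₀
  have h2 : dist ((f : C(X,ℝ)) x) (y x) ≤ dist (f : C(X,ℝ)) y :=
    ContinuousMap.dist_apply_le_dist x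
  have := hx y hy
  calc dist ((f : C(X,ℝ)) x₀) ((f : C(X,ℝ)) x)
      ≤ dist ((f : C(X,ℝ)) x₀) (y x₀) + dist (y x₀) (y x) + dist (y x) ((f : C(X,ℝ)) x) :=
        dist_triangle4 _ _ _ _
    _ < ε/3 + ε/3 + ε/3 := by
        have ha : dist ((f : C(X,ℝ)) x₀) (y x₀) < ε/3 := lt_of_le_of_lt h1 hfy'
        have hb : dist (y x₀) (y x) < ε/3 := by rw [dist_comm]; exact this
        have hc : dist ((f : C(X,ℝ)) x) (y x) < ε/3 := lt_of_le_of_lt h2 hfy'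
        rw [dist_comm (y x)]
        linarith
    _ = ε := by ring

/-- For a tight sequence of Borel probability measures on `C([0,1], ℝ)` and a bounded
continuous claim `M`, the piecewise-linear discretizations `ω ↦ ω^k` along the grid of mesh
`1/k` satisfy: for every `δ > 0` there are `K, N` such that for all `k ≥ K` and `n ≥ N`,
`μ_n{ω : |M(ω^k) − M(ω)| > δ} < δ`.  Here `interp k ω` denotes `ω^k`, characterized by the
affine interpolation formula on each subinterval `[j/k, (j+1)/k]`. -/
theorem stmt15
    [MeasurableSpace C(Set.Icc (0 : ℝ) 1, ℝ)] [BorelSpace C(Set.Icc (0 : ℝ) 1, ℝ)]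
    (μ : ℕ → Measure C(Set.Icc (0 : ℝ) 1, ℝ)) (hprob : ∀ n, IsProbabilityMeasure (μ n))
    (htight : ∀ ε > (0 : ℝ), ∃ K : Set C(Set.Icc (0 : ℝ) 1, ℝ), IsCompact K ∧
      ∀ n, ENNReal.ofReal (1 - ε) ≤ μ n K)
    (M : C(Set.Icc (0 : ℝ) 1, ℝ) → ℝ) (hMbdd : ∃ B, ∀ ω, |M ω| ≤ B) (hMcont : Continuous M)
    (interp : ℕ → C(Set.Icc (0 : ℝ) 1, ℝ) → C(Set.Icc (0 : ℝ) 1, ℝ))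
    (hinterp : ∀ k : ℕ, 1 ≤ k → ∀ ω, ∀ j : ℕ, j < k → ∀ s : Set.Icc (0 : ℝ) 1,
      (j : ℝ) / k ≤ (s : ℝ) → (s : ℝ) ≤ ((j : ℝ) + 1) / k →
      interp k ω s =
        ω (Set.projIcc 0 1 zero_le_one ((j : ℝ) / k)) +
          (k : ℝ) * ((s : ℝ) - (j : ℝ) / k) *
            (ω (Set.projIcc 0 1 zero_le_one (((j : ℝ) + 1) / k)) -
              ω (Set.projIcc 0 1 zero_le_one ((j : ℝ) / k)))) :
    ∀ δ > (0 : ℝ), ∃ K N : ℕ, ∀ k ≥ K, ∀ n ≥ N,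
      μ n {ω | δ < |M (interp k ω) - M ω|} < ENNReal.ofReal δ := by
  intro δ hδ
  obtain ⟨Kc, hKc, hKmass⟩ := htight (δ/2) (by linarith)
  have hr : {x : C(Set.Icc (0:ℝ) 1, ℝ) × C(Set.Icc (0:ℝ) 1, ℝ) |
      x.1 ∈ Kc → (M x.1, M x.2) ∈ {p : ℝ × ℝ | dist p.1 p.2 < δ}} ∈ 𝓤 _ :=
    hKc.uniformContinuousAt_of_continuousAt M (fun a _ => hMcont.continuousAt)
      (Metric.dist_mem_uniformity hδ)
  obtain ⟨η, hη, hηM⟩ := Metric.mem_uniformity_dist.mp hr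
  have hue := CompactSpace.uniformEquicontinuous_of_equicontinuous (my_equi hKc)
  obtain ⟨d, hd, hdK⟩ := Metric.uniformEquicontinuous_iff.mp hue (η/2) (by linarith)
  refine ⟨⌈1/d⌉₊ + 1, 0, fun k hk n _ => ?_⟩
  have hk1 : 1 ≤ k := le_trans (Nat.le_add_left 1 _) hk
  have hkpos : (0:ℝ) < k := by exact_mod_cast Nat.pos_of_ne_zero (by omega)
  have hkd : (1:ℝ)/k < d := by
    rw [div_lt_iff₀ hkpos]
    have h1 : (1:ℝ)/d < k := by
      have : (⌈1/d⌉₊ : ℝ) < k := by exact_mod_cast Nat.lt_of_lt_of_le (Nat.lt_succ_self _) hk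
      exact lt_of_le_of_lt (Nat.le_ceil _) this
    rw [div_lt_iff₀ hd] at h1
    linarith [h1]
  have hsub : {ω | δ < |M (interp k ω) - M ω|} ⊆ Kcᶜ := by
    intro ω hω hωK
    have hpt : ∀ s : Set.Icc (0:ℝ) 1, dist (interp k ω s) (ω s) ≤ η/2 := by
      intro s
      have hs0 : (0:ℝ) ≤ (s:ℝ) := s.2.1
      have hs1 : (s:ℝ) ≤ 1 := s.2.2
      set j : ℕ := min (⌊(k:ℝ) * s⌋₊) (k-1) with hjdef
      have hj : j < k := lt_of_le_of_lt (min_le_right _ _) (by omega)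
      have hjks : (j:ℝ) ≤ (k:ℝ) * s := by
        have h1 : (j:ℝ) ≤ (⌊(k:ℝ) * s⌋₊ : ℝ) := by exact_mod_cast min_le_left _ _
        exact h1.trans (Nat.floor_le (by positivity))
      have h1 : (j:ℝ)/k ≤ (s:ℝ) := by rw [div_le_iff₀ hkpos]; linarith [hjks]
      have h2 : (s:ℝ) ≤ ((j:ℝ)+1)/k := by
        rcases le_or_gt (⌊(k:ℝ) * s⌋₊) (k-1) with h | h
        · have hj' : j = ⌊(k:ℝ) * s⌋₊ := min_eq_left h
          have : (k:ℝ) * s < (⌊(k:ℝ) * s⌋₊ : ℝ) + 1 := Nat.lt_floor_add_one _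
          rw [le_div_iff₀ hkpos, hj']
          push_cast
          linarith
        · have hj' : j = k - 1 := min_eq_right h.le
          have : ((j:ℝ)+1) = (k:ℝ) := by
            rw [hj']
            have : ((k-1:ℕ):ℝ) = (k:ℝ) - 1 := by
              rw [Nat.cast_sub hk1]; norm_num
            rw [this]; ring
          rw [this, div_self hkpos.ne']
          exact hs1
      have hfact := hinterp k hk1 ω j hj s h1 h2
      have hmema : (j:ℝ)/k ∈ Set.Icc (0:ℝ) 1 := by
        constructor
        · positivity
        · rw [div_le_one hkpos]; exact_mod_cast hj.le
      have hmemb : ((j:ℝ)+1)/k ∈ Set.Icc (0:ℝ) 1 := by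
        constructor
        · positivity
        · rw [div_le_one hkpos]
          have : (j:ℝ) + 1 ≤ (k:ℝ) := by exact_mod_cast Nat.succ_le_of_lt hj
          exact this
      set a := Set.projIcc 0 1 zero_le_one ((j:ℝ)/k) with hadef
      set b := Set.projIcc 0 1 zero_le_one (((j:ℝ)+1)/k) with hbdef
      have hacoe : (a:ℝ) = (j:ℝ)/k := by rw [hadef, Set.projIcc_of_mem _ hmema]
      have hbcoe : (b:ℝ) = ((j:ℝ)+1)/k := by rw [hbdef, Set.projIcc_of_mem _ hmemb]
      have hdista : dist a s < d := by
        rw [Subtype.dist_eq, Real.dist_eq, hacoe, abs_of_nonpos (by linarith)]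
        have : (s:ℝ) - (j:ℝ)/k ≤ 1/k := by
          have : ((j:ℝ)+1)/k - (j:ℝ)/k = 1/k := by ring
          linarith [h2, this]
        linarith
      have hdistb : dist b s < d := by
        rw [Subtype.dist_eq, Real.dist_eq, hbcoe, abs_of_nonneg (by linarith)]
        have : ((j:ℝ)+1)/k - (s:ℝ) ≤ 1/k := by
          have : ((j:ℝ)+1)/k - (j:ℝ)/k = 1/k := by ring
          linarith [h1, this]
        linarith
      have hA : dist (ω a) (ω s) < η/2 := hdK a s hdista ⟨ω, hωK⟩
      have hB : dist (ω b) (ω s) < η/2 := hdK b s hdistb ⟨ω, hωK⟩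
      rw [Real.dist_eq] at hA hB ⊢
      rw [hfact]
      set θ : ℝ := (k:ℝ) * ((s:ℝ) - (j:ℝ)/k) with hθdef
      have hθ0 : 0 ≤ θ := by
        apply mul_nonneg hkpos.le
        linarith
      have hθ1 : θ ≤ 1 := by
        rw [hθdef]
        have hle : (s:ℝ) - (j:ℝ)/k ≤ 1/k := by
          have : ((j:ℝ)+1)/k - (j:ℝ)/k = 1/k := by ring
          linarith [h2, this]
        calc (k:ℝ) * ((s:ℝ) - (j:ℝ)/k) ≤ (k:ℝ) * (1/k) := by
              exact mul_le_mul_of_nonneg_left hle hkpos.le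
          _ = 1 := by field_simp
      have e : ω a + θ * (ω b - ω a) - ω s = (1-θ)*(ω a - ω s) + θ*(ω b - ω s) := by ring
      rw [e]
      calc |(1-θ)*(ω a - ω s) + θ*(ω b - ω s)|
          ≤ |(1-θ)*(ω a - ω s)| + |θ*(ω b - ω s)| := abs_add_le _ _
        _ = (1-θ)*|ω a - ω s| + θ*|ω b - ω s| := by
            rw [abs_mul, abs_mul, abs_of_nonneg (by linarith), abs_of_nonneg hθ0]
        _ ≤ (1-θ)*(η/2) + θ*(η/2) :=
            add_le_add (mul_le_mul_of_nonneg_left hA.le (by linarith))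
              (mul_le_mul_of_nonneg_left hB.le hθ0)
        _ = η/2 := by ring
    have hdist : dist (interp k ω) ω < η :=
      lt_of_le_of_lt ((ContinuousMap.dist_le (by linarith)).mpr hpt) (by linarith)
    have hMclose := hηM (show dist ω (interp k ω) < η by rwa [dist_comm]) hωK
    simp only [Set.mem_setOf_eq, Real.dist_eq] at hMclose
    rw [Set.mem_setOf_eq, abs_sub_comm] at hω
    linarith
  haveI := hprob n
  calc μ n {ω | δ < |M (interp k ω) - M ω|}
      ≤ μ n Kcᶜ := measure_mono hsub
    _ = 1 - μ n Kc := by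
        rw [measure_compl hKc.isClosed.measurableSet (measure_ne_top _ _), measure_univ]
    _ ≤ 1 - ENNReal.ofReal (1 - δ/2) := tsub_le_tsub_left (hKmass n) 1
    _ ≤ ENNReal.ofReal (δ/2) := by
        rcases le_or_gt (1:ℝ) (δ/2) with h | h
        · rw [ENNReal.ofReal_eq_zero.mpr (by linarith), tsub_zero]
          exact ENNReal.one_le_ofReal.mpr h
        · have he : ENNReal.ofReal (1 - (1 - δ/2)) = ENNReal.ofReal 1 - ENNReal.ofReal (1-δ/2) :=
            ENNReal.ofReal_sub 1 (by linarith)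
          rw [show (1:ℝ) - (1 - δ/2) = δ/2 by ring, ENNReal.ofReal_one] at he
          rw [← he]
    _ < ENNReal.ofReal δ := (ENNReal.ofReal_lt_ofReal_iff hδ).mpr (by linarith)
end
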